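/- arXiv:2207.06648 — 5 statements merged into one kernel-verified Lean document; each statement's English description precedes it below -/
import Mathlib

section
/- Let ω be a bounded covector field on K. For x ∈ K define 𝒮(ω)(x) := Σ_{k≥0} ω(f^k x) ∘ P^s(f^k x) ∘ Df^k(x) − Σ_{k≥1} ω(f^{-k} x) ∘ P^u(f^{-k} x) ∘ Df^{-k}(x). Then both series converge absolutely in E*, sup_{x∈K} ‖𝒮(ω)(x)‖ < ∞, and along every orbit x_n := f^n(x₀) in K the covectors ν_n := 𝒮(ω)(x_n) satisfy the inhomogeneous adjoint equation ν_n = ν_{n+1} ∘ Df(x_n) + ω(x_n) for all n ∈ ℤ. -/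
/-!
Since the splitting is `Df`-invariant, the projections commute with `Df^k` (and with `Df^{-k}`), so
the `k`-th term of the stable series is `ω ∘ Df^k ∘ P^s`, of norm at most `‖ω‖ C λ^k ‖P^s‖`, and
likewise for the unstable series: both converge geometrically, uniformly on `K`. Composing with
`Df(x)` shifts the stable series at `f x` one step forward and the unstable one one step back (the
chain rule, and `g = f⁻¹`), so `𝒮(ω)(f x) ∘ Df(x) - 𝒮(ω)(x)` reduces to the two boundary terms
`-ω ∘ P^s - ω ∘ P^u = -ω`.
-/

open Function Set Filter MeasureTheory Topology

section

variable {𝕜 E F : Type*} [NontriviallyNormedField 𝕜] [NormedAddCommGroup E] [NormedSpace 𝕜 E]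
  [NormedAddCommGroup F] [NormedSpace 𝕜 F]

lemma comp_proj_eq_of_map_le {Vs Vu Ws Wu : Submodule 𝕜 E} (hW : Disjoint Ws Wu)
    {Ps Pu Qs Qu D : E →L[𝕜] E}
    (hP : ∀ v, Ps v ∈ Vs ∧ Pu v ∈ Vu ∧ Ps v + Pu v = v)
    (hQ : ∀ v, Qs v ∈ Ws ∧ Qu v ∈ Wu ∧ Qs v + Qu v = v)
    (hs : Vs.map (D : E →ₗ[𝕜] E) ≤ Ws) (hu : Vu.map (D : E →ₗ[𝕜] E) ≤ Wu) :
    Qs.comp D = D.comp Ps ∧ Qu.comp D = D.comp Pu := by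
  have hQs : ∀ v, Qs (D v) = D (Ps v) := by
    intro v
    obtain ⟨hQsv, hQuv, hQv⟩ := hQ (D v)
    obtain ⟨hPsv, hPuv, hPv⟩ := hP v
    have hsub : Qs (D v) - D (Ps v) = D (Pu v) - Qu (D v) := by
      rw [sub_eq_sub_iff_add_eq_add, hQv, ← map_add, add_comm, hPv]
    have hmem_s : Qs (D v) - D (Ps v) ∈ Ws := Ws.sub_mem hQsv (hs (Submodule.mem_map_of_mem hPsv))
    have hmem_u : Qs (D v) - D (Ps v) ∈ Wu :=
      hsub ▸ Wu.sub_mem (hu (Submodule.mem_map_of_mem hPuv)) hQuv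
    exact sub_eq_zero.mp (Submodule.disjoint_def.mp hW _ hmem_s hmem_u)
  refine ⟨ContinuousLinearMap.ext hQs, ContinuousLinearMap.ext fun v => ?_⟩
  rw [ContinuousLinearMap.comp_apply, ContinuousLinearMap.comp_apply,
    eq_sub_of_add_eq' (hQ (D v)).2.2, eq_sub_of_add_eq' (hP v).2.2, map_sub, hQs]

lemma opNorm_comp_le_of_forall_mem {V : Submodule 𝕜 E} {D P : E →L[𝕜] E} {c : ℝ} (hc : 0 ≤ c)
    (hP : ∀ v, P v ∈ V) (hD : ∀ v ∈ V, ‖D v‖ ≤ c * ‖v‖) : ‖D.comp P‖ ≤ c * ‖P‖ :=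
  ContinuousLinearMap.opNorm_le_bound _ (by positivity) fun v =>
    calc ‖D (P v)‖ ≤ c * ‖P v‖ := hD _ (hP v)
      _ ≤ c * (‖P‖ * ‖v‖) := by gcongr; exact P.le_opNorm v
      _ = c * ‖P‖ * ‖v‖ := (mul_assoc _ _ _).symm

section Derivatives

variable {φ ψ : E → E}

lemma fderiv_iterate_succ (hφ : Differentiable 𝕜 φ) (n : ℕ) (x : E) :
    fderiv 𝕜 φ^[n + 1] x = (fderiv 𝕜 φ^[n] (φ x)).comp (fderiv 𝕜 φ x) := by
  rw [iterate_succ]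
  exact fderiv_comp x (hφ.iterate n _) (hφ x)

lemma fderiv_iterate_succ' (hφ : Differentiable 𝕜 φ) (n : ℕ) (x : E) :
    fderiv 𝕜 φ^[n + 1] x = (fderiv 𝕜 φ (φ^[n] x)).comp (fderiv 𝕜 φ^[n] x) := by
  rw [iterate_succ']
  exact fderiv_comp x (hφ _) (hφ.iterate n x)

lemma fderiv_comp_fderiv_of_leftInverse (hψφ : LeftInverse ψ φ) (hψ : Differentiable 𝕜 ψ)
    (hφ : Differentiable 𝕜 φ) (x : E) :
    (fderiv 𝕜 ψ (φ x)).comp (fderiv 𝕜 φ x) = ContinuousLinearMap.id 𝕜 E := by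
  rw [← fderiv_comp x (hψ _) (hφ x), hψφ.comp_eq_id, fderiv_id]

variable {K : Set E}

lemma map_fderiv_iterate_le (hφ : Differentiable 𝕜 φ) (hK : MapsTo φ K K)
    {V : E → Submodule 𝕜 E}
    (hV : ∀ x ∈ K, (V x).map (fderiv 𝕜 φ x : E →ₗ[𝕜] E) ≤ V (φ x)) (n : ℕ) {x : E} (hx : x ∈ K) :
    (V x).map (fderiv 𝕜 φ^[n] x : E →ₗ[𝕜] E) ≤ V (φ^[n] x) := by
  induction n with
  | zero => simp
  | succ n ih =>
    rw [fderiv_iterate_succ' hφ, ContinuousLinearMap.toLinearMap_comp, Submodule.map_comp,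
      iterate_succ_apply']
    exact (Submodule.map_mono ih).trans (hV _ (hK.iterate n hx))

lemma map_fderiv_eq_of_leftInverse (hψφ : LeftInverse ψ φ) (hφψ : RightInverse ψ φ)
    (hψ : Differentiable 𝕜 ψ) (hφ : Differentiable 𝕜 φ) (hK : MapsTo ψ K K)
    {V : E → Submodule 𝕜 E} (hV : ∀ x ∈ K, (V x).map (fderiv 𝕜 φ x : E →ₗ[𝕜] E) = V (φ x))
    {x : E} (hx : x ∈ K) :
    (V x).map (fderiv 𝕜 ψ x : E →ₗ[𝕜] E) = V (ψ x) := by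
  have hinv := fderiv_comp_fderiv_of_leftInverse hψφ hψ hφ (ψ x)
  rw [hφψ x] at hinv
  calc (V x).map (fderiv 𝕜 ψ x : E →ₗ[𝕜] E)
      = ((V (ψ x)).map (fderiv 𝕜 φ (ψ x) : E →ₗ[𝕜] E)).map (fderiv 𝕜 ψ x : E →ₗ[𝕜] E) := by
        rw [hV _ (hK hx), hφψ x]
    _ = V (ψ x) := by
        rw [← Submodule.map_comp, ← ContinuousLinearMap.toLinearMap_comp, hinv,
          ContinuousLinearMap.coe_id, Submodule.map_id]

lemma proj_comp_fderiv_iterate (hφ : Differentiable 𝕜 φ) (hK : MapsTo φ K K)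
    {Vs Vu : E → Submodule 𝕜 E}
    (hVs : ∀ x ∈ K, (Vs x).map (fderiv 𝕜 φ x : E →ₗ[𝕜] E) ≤ Vs (φ x))
    (hVu : ∀ x ∈ K, (Vu x).map (fderiv 𝕜 φ x : E →ₗ[𝕜] E) ≤ Vu (φ x))
    (hdisj : ∀ x ∈ K, Disjoint (Vs x) (Vu x)) {Ps Pu : E → E →L[𝕜] E}
    (hproj : ∀ x ∈ K, ∀ v, Ps x v ∈ Vs x ∧ Pu x v ∈ Vu x ∧ Ps x v + Pu x v = v)
    (n : ℕ) {x : E} (hx : x ∈ K) :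
    (Ps (φ^[n] x)).comp (fderiv 𝕜 φ^[n] x) = (fderiv 𝕜 φ^[n] x).comp (Ps x) ∧
      (Pu (φ^[n] x)).comp (fderiv 𝕜 φ^[n] x) = (fderiv 𝕜 φ^[n] x).comp (Pu x) :=
  comp_proj_eq_of_map_le (hdisj _ (hK.iterate n hx)) (hproj x hx) (hproj _ (hK.iterate n hx))
    (map_fderiv_iterate_le hφ hK hVs n hx) (map_fderiv_iterate_le hφ hK hVu n hx)

end Derivatives

noncomputable def adjointTerm (φ : E → E) (P : E → E →L[𝕜] E) (ω : E → E →L[𝕜] F) (k : ℕ)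
    (x : E) : E →L[𝕜] F :=
  ((ω (φ^[k] x)).comp (P (φ^[k] x))).comp (fderiv 𝕜 φ^[k] x)

noncomputable def adjointShadowing (f g : E → E) (Ps Pu : E → E →L[𝕜] E) (ω : E → E →L[𝕜] F)
    (x : E) : E →L[𝕜] F :=
  (∑' k, adjointTerm f Ps ω k x) - ∑' k, adjointTerm g Pu ω (k + 1) x

section AdjointTerm

variable {φ ψ : E → E} {P : E → E →L[𝕜] E} {ω : E → E →L[𝕜] F}

lemma adjointTerm_zero (x : E) : adjointTerm φ P ω 0 x = (ω x).comp (P x) := by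
  simp [adjointTerm]

lemma adjointTerm_comp_fderiv (hφ : Differentiable 𝕜 φ) (k : ℕ) (x : E) :
    (adjointTerm φ P ω k (φ x)).comp (fderiv 𝕜 φ x) = adjointTerm φ P ω (k + 1) x := by
  rw [adjointTerm, ContinuousLinearMap.comp_assoc, ← fderiv_iterate_succ hφ, ← iterate_succ_apply]
  rfl

lemma adjointTerm_succ_comp_fderiv_of_leftInverse (hψφ : LeftInverse ψ φ)
    (hψ : Differentiable 𝕜 ψ) (hφ : Differentiable 𝕜 φ) (k : ℕ) (x : E) :
    (adjointTerm ψ P ω (k + 1) (φ x)).comp (fderiv 𝕜 φ x) = adjointTerm ψ P ω k x := by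
  have hiter : ψ^[k + 1] (φ x) = ψ^[k] x := by rw [iterate_succ_apply, hψφ x]
  simp only [adjointTerm, hiter, fderiv_iterate_succ hψ, hψφ x, ContinuousLinearMap.comp_assoc,
    fderiv_comp_fderiv_of_leftInverse hψφ hψ hφ, ContinuousLinearMap.comp_id]

lemma norm_adjointTerm_le {k : ℕ} {x : E} {V : Submodule 𝕜 E} {c Mω MP : ℝ} (hc : 0 ≤ c)
    (hω : ‖ω (φ^[k] x)‖ ≤ Mω) (hP : ‖P x‖ ≤ MP) (hPV : ∀ v, P x v ∈ V)
    (hD : ∀ v ∈ V, ‖fderiv 𝕜 φ^[k] x v‖ ≤ c * ‖v‖)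
    (hcomm : (P (φ^[k] x)).comp (fderiv 𝕜 φ^[k] x) = (fderiv 𝕜 φ^[k] x).comp (P x)) :
    ‖adjointTerm φ P ω k x‖ ≤ Mω * c * MP := by
  have hDP : ‖(fderiv 𝕜 φ^[k] x).comp (P x)‖ ≤ c * MP :=
    (opNorm_comp_le_of_forall_mem hc hPV hD).trans (by gcongr)
  rw [adjointTerm, ContinuousLinearMap.comp_assoc, hcomm, mul_assoc]
  exact (ContinuousLinearMap.opNorm_comp_le _ _).trans
    (mul_le_mul hω hDP (norm_nonneg _) ((norm_nonneg _).trans hω))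

lemma norm_adjointTerm_le_geometric {K : Set E} (hK : MapsTo φ K K) {V : E → Submodule 𝕜 E}
    {C lam Mω MP : ℝ} (hC : 0 ≤ C) (hlam : 0 ≤ lam)
    (hcontr : ∀ n : ℕ, ∀ x ∈ K, ∀ v ∈ V x, ‖fderiv 𝕜 φ^[n] x v‖ ≤ C * lam ^ n * ‖v‖)
    (hPV : ∀ x ∈ K, ∀ v, P x v ∈ V x) (hP : ∀ x ∈ K, ‖P x‖ ≤ MP) (hω : ∀ x ∈ K, ‖ω x‖ ≤ Mω)
    (hcomm : ∀ n : ℕ, ∀ x ∈ K,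
      (P (φ^[n] x)).comp (fderiv 𝕜 φ^[n] x) = (fderiv 𝕜 φ^[n] x).comp (P x))
    (k : ℕ) {x : E} (hx : x ∈ K) :
    ‖adjointTerm φ P ω k x‖ ≤ Mω * C * MP * lam ^ k :=
  (norm_adjointTerm_le (by positivity) (hω _ (hK.iterate k hx)) (hP x hx) (hPV x hx)
    (hcontr k x hx) (hcomm k x hx)).trans_eq (by ring)

end AdjointTerm

lemma ContinuousLinearMap.tsum_comp {ι G : Type*} [NormedAddCommGroup G] [NormedSpace 𝕜 G]
    {a : ι → E →L[𝕜] F} (ha : Summable a) (L : G →L[𝕜] E) : (∑' i, a i).comp L = ∑' i, (a i).comp L :=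
  ((ContinuousLinearMap.compL 𝕜 G E F).flip L).map_tsum ha

section AdjointShadowing

variable {f g : E → E} {Ps Pu : E → E →L[𝕜] E} {ω : E → E →L[𝕜] F}

lemma adjointShadowing_eq_comp_fderiv_add (hgf : LeftInverse g f) (hf : Differentiable 𝕜 f)
    (hg : Differentiable 𝕜 g) {x : E} (hproj : ∀ v, Ps x v + Pu x v = v)
    (hs : Summable fun k => adjointTerm f Ps ω k x)
    (hs' : Summable fun k => adjointTerm f Ps ω k (f x))
    (hu : Summable fun k => adjointTerm g Pu ω k x)
    (hu' : Summable fun k => adjointTerm g Pu ω (k + 1) (f x)) :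
    adjointShadowing f g Ps Pu ω x = (adjointShadowing f g Ps Pu ω (f x)).comp (fderiv 𝕜 f x)
      + ω x := by
  have hω : ω x = adjointTerm f Ps ω 0 x + adjointTerm g Pu ω 0 x := by
    ext v
    simp only [adjointTerm_zero, add_apply, ContinuousLinearMap.comp_apply, ← map_add, hproj]
  rw [adjointShadowing, adjointShadowing, ContinuousLinearMap.sub_comp,
    ContinuousLinearMap.tsum_comp hs', ContinuousLinearMap.tsum_comp hu']
  simp only [adjointTerm_comp_fderiv hf, adjointTerm_succ_comp_fderiv_of_leftInverse hgf hg hf]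
  rw [hs.tsum_eq_zero_add, hu.tsum_eq_zero_add, hω]
  abel

lemma norm_adjointShadowing_le {x : E} {B r : ℝ} (hr0 : 0 ≤ r) (hr1 : r < 1)
    (hs : ∀ k, ‖adjointTerm f Ps ω k x‖ ≤ B * r ^ k)
    (hu : ∀ k, ‖adjointTerm g Pu ω k x‖ ≤ B * r ^ k) :
    ‖adjointShadowing f g Ps Pu ω x‖ ≤ B * (1 - r)⁻¹ + B * r * (1 - r)⁻¹ := by
  have hgeom := hasSum_geometric_of_lt_one hr0 hr1
  refine (norm_sub_le _ _).trans (add_le_add ?_ ?_)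
  · exact tsum_of_norm_bounded (hgeom.mul_left B) hs
  · refine tsum_of_norm_bounded (hgeom.mul_left (B * r)) fun k => (hu (k + 1)).trans_eq ?_
    ring

end AdjointShadowing

lemma orbit_mem_of_mapsTo {α : Type*} {f g : α → α} {K : Set α} (hf : MapsTo f K K) (hg : MapsTo g K K)
    (hgf : LeftInverse g f) {orb : ℤ → α} (h0 : orb 0 ∈ K)
    (horb : ∀ n, orb (n + 1) = f (orb n)) (n : ℤ) : orb n ∈ K := by
  induction n using Int.induction_on with
  | zero => exact h0
  | succ i ih => exact horb i ▸ hf ih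
  | pred i ih =>
    have hprev : orb (-i) = f (orb (-i - 1)) := by simpa using horb (-i - 1)
    rw [← hgf (orb (-i - 1)), ← hprev]
    exact hg ih

end

theorem adjoint_shadowing_expansion_discrete_general
    {E : Type*} [NormedAddCommGroup E] [NormedSpace ℝ E]
    (f g : E → E) (hgf : Function.LeftInverse g f) (hfg : Function.RightInverse g f)
    (hf : ContDiff ℝ 1 f) (hg : ContDiff ℝ 1 g)
    (K : Set E) (hfK : f '' K = K)
    (Vs Vu : E → Submodule ℝ E)
    (hsplit : ∀ x ∈ K, IsCompl (Vs x) (Vu x))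
    (hequivs : ∀ x ∈ K, (Vs x).map (fderiv ℝ f x : E →ₗ[ℝ] E) = Vs (f x))
    (hequivu : ∀ x ∈ K, (Vu x).map (fderiv ℝ f x : E →ₗ[ℝ] E) = Vu (f x))
    (C lam : ℝ) (hC : 0 < C) (hlam0 : 0 < lam) (hlam1 : lam < 1)
    (hyps : ∀ (n : ℕ), ∀ x ∈ K, ∀ v ∈ Vs x, ‖fderiv ℝ (f^[n]) x v‖ ≤ C * lam ^ n * ‖v‖)
    (hypu : ∀ (n : ℕ), ∀ x ∈ K, ∀ v ∈ Vu x, ‖fderiv ℝ (g^[n]) x v‖ ≤ C * lam ^ n * ‖v‖)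
    (Ps Pu : E → E →L[ℝ] E)
    (hproj : ∀ x ∈ K, ∀ v : E, Ps x v ∈ Vs x ∧ Pu x v ∈ Vu x ∧ Ps x v + Pu x v = v)
    (hPbdd : ∃ M : ℝ, ∀ x ∈ K, ‖Ps x‖ + ‖Pu x‖ ≤ M)
    (ω : E → E →L[ℝ] ℝ) (hωb : ∃ M : ℝ, ∀ x ∈ K, ‖ω x‖ ≤ M)
    (ν : E → E →L[ℝ] ℝ)
    (hν : ∀ x : E, ν x =
      (∑' k : ℕ, ((ω (f^[k] x)).comp (Ps (f^[k] x))).comp (fderiv ℝ (f^[k]) x)) -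
      ∑' k : ℕ, ((ω (g^[k+1] x)).comp (Pu (g^[k+1] x))).comp (fderiv ℝ (g^[k+1]) x)) :
    (∀ x ∈ K,
      Summable (fun k : ℕ =>
        ‖((ω (f^[k] x)).comp (Ps (f^[k] x))).comp (fderiv ℝ (f^[k]) x)‖) ∧
      Summable (fun k : ℕ =>
        ‖((ω (g^[k+1] x)).comp (Pu (g^[k+1] x))).comp (fderiv ℝ (g^[k+1]) x)‖)) ∧
    (∃ M : ℝ, ∀ x ∈ K, ‖ν x‖ ≤ M) ∧
    (∀ orb : ℤ → E, orb 0 ∈ K → (∀ n : ℤ, orb (n + 1) = f (orb n)) →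
      ∀ n : ℤ, ν (orb n) = (ν (orb (n + 1))).comp (fderiv ℝ f (orb n)) + ω (orb n)) := by
  obtain rfl : ν = adjointShadowing f g Ps Pu ω := funext hν
  obtain ⟨MP, hMP⟩ := hPbdd
  obtain ⟨Mω, hMω⟩ := hωb
  have hfd := hf.differentiable one_ne_zero
  have hgd := hg.differentiable one_ne_zero
  have hKf : MapsTo f K K := (mapsTo_image f K).mono_right hfK.subset
  have hKg : MapsTo g K K := (hgf.leftInvOn K).mapsTo hfK.ge
  have hdisj := fun x hx => (hsplit x hx).disjoint
  have hcf := proj_comp_fderiv_iterate hfd hKf (fun x hx => (hequivs x hx).le)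
    (fun x hx => (hequivu x hx).le) hdisj hproj
  have hcg := proj_comp_fderiv_iterate hgd hKg
    (fun x hx => (map_fderiv_eq_of_leftInverse hgf hfg hgd hfd hKg hequivs hx).le)
    (fun x hx => (map_fderiv_eq_of_leftInverse hgf hfg hgd hfd hKg hequivu hx).le) hdisj hproj
  have hs := norm_adjointTerm_le_geometric (ω := ω) hKf hC.le hlam0.le hyps
    (fun x hx v => (hproj x hx v).1) (fun x hx => (le_add_of_nonneg_right (norm_nonneg _)).trans
      (hMP x hx)) hMω (fun n x hx => (hcf n hx).1)
  have hu := norm_adjointTerm_le_geometric (ω := ω) hKg hC.le hlam0.le hypu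
    (fun x hx v => (hproj x hx v).2.1) (fun x hx => (le_add_of_nonneg_left (norm_nonneg _)).trans
      (hMP x hx)) hMω (fun n x hx => (hcg n hx).2)
  have hgeom := (summable_geometric_of_lt_one hlam0.le hlam1).mul_left (Mω * C * MP)
  have hsum_s x (hx : x ∈ K) := hgeom.of_nonneg_of_le (fun _ => norm_nonneg _) (hs · hx)
  have hsum_u x (hx : x ∈ K) := hgeom.of_nonneg_of_le (fun _ => norm_nonneg _) (hu · hx)
  refine ⟨fun x hx => ⟨hsum_s x hx, (summable_nat_add_iff 1).mpr (hsum_u x hx)⟩,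
    ⟨_, fun x hx => norm_adjointShadowing_le hlam0.le hlam1 (hs · hx) (hu · hx)⟩,
    fun orb h0 horb n => ?_⟩
  have hx := orbit_mem_of_mapsTo hKf hKg hgf h0 horb n
  rw [horb n]
  exact adjointShadowing_eq_comp_fderiv_add hgf hfd hgd (fun v => (hproj _ hx v).2.2)
    (hsum_s _ hx).of_norm (hsum_s _ (hKf hx)).of_norm (hsum_u _ hx).of_norm
    ((summable_nat_add_iff 1).mpr (hsum_u _ (hKf hx))).of_norm

theorem adjoint_shadowing_expansion_discrete
    {E : Type*} [NormedAddCommGroup E] [NormedSpace ℝ E] [FiniteDimensional ℝ E]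
    (f g : E → E) (hgf : Function.LeftInverse g f) (hfg : Function.RightInverse g f)
    (hf : ContDiff ℝ 1 f) (hg : ContDiff ℝ 1 g)
    (K : Set E) (hKc : IsCompact K) (hfK : f '' K = K)
    (Vs Vu : E → Submodule ℝ E)
    (hsplit : ∀ x ∈ K, IsCompl (Vs x) (Vu x))
    (hequivs : ∀ x ∈ K, (Vs x).map (fderiv ℝ f x : E →ₗ[ℝ] E) = Vs (f x))
    (hequivu : ∀ x ∈ K, (Vu x).map (fderiv ℝ f x : E →ₗ[ℝ] E) = Vu (f x))
    (C lam : ℝ) (hC : 0 < C) (hlam0 : 0 < lam) (hlam1 : lam < 1)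
    (hyps : ∀ (n : ℕ), ∀ x ∈ K, ∀ v ∈ Vs x, ‖fderiv ℝ (f^[n]) x v‖ ≤ C * lam ^ n * ‖v‖)
    (hypu : ∀ (n : ℕ), ∀ x ∈ K, ∀ v ∈ Vu x, ‖fderiv ℝ (g^[n]) x v‖ ≤ C * lam ^ n * ‖v‖)
    (Ps Pu : E → E →L[ℝ] E)
    (hproj : ∀ x ∈ K, ∀ v : E, Ps x v ∈ Vs x ∧ Pu x v ∈ Vu x ∧ Ps x v + Pu x v = v)
    (hPbdd : ∃ M : ℝ, ∀ x ∈ K, ‖Ps x‖ + ‖Pu x‖ ≤ M)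
    (ω : E → E →L[ℝ] ℝ) (hωb : ∃ M : ℝ, ∀ x ∈ K, ‖ω x‖ ≤ M)
    (ν : E → E →L[ℝ] ℝ)
    (hν : ∀ x : E, ν x =
      (∑' k : ℕ, ((ω (f^[k] x)).comp (Ps (f^[k] x))).comp (fderiv ℝ (f^[k]) x)) -
      ∑' k : ℕ, ((ω (g^[k+1] x)).comp (Pu (g^[k+1] x))).comp (fderiv ℝ (g^[k+1]) x)) :
    (∀ x ∈ K,
      Summable (fun k : ℕ =>
        ‖((ω (f^[k] x)).comp (Ps (f^[k] x))).comp (fderiv ℝ (f^[k]) x)‖) ∧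
      Summable (fun k : ℕ =>
        ‖((ω (g^[k+1] x)).comp (Pu (g^[k+1] x))).comp (fderiv ℝ (g^[k+1]) x)‖)) ∧
    (∃ M : ℝ, ∀ x ∈ K, ‖ν x‖ ≤ M) ∧
    (∀ orb : ℤ → E, orb 0 ∈ K → (∀ n : ℤ, orb (n + 1) = f (orb n)) →
      ∀ n : ℤ, ν (orb n) = (ν (orb (n + 1))).comp (fderiv ℝ f (orb n)) + ω (orb n)) :=
  adjoint_shadowing_expansion_discrete_general f g hgf hfg hf hg K hfK Vs Vu hsplit hequivs hequivu
    C lam hC hlam0 hlam1 hyps hypu Ps Pu hproj hPbdd ω hωb ν hν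
end

section
/- Along any orbit x_n := f^n(x₀) in K and for any sequence of covectors ω_n ∈ E* with sup_n ‖ω_n‖ < ∞, there is at most one bounded solution of the inhomogeneous adjoint equation: if ν_n and ν'_n are two sequences in E* with sup_n ‖ν_n‖ < ∞, sup_n ‖ν'_n‖ < ∞, ν_n = ν_{n+1} ∘ Df(x_n) + ω_n and ν'_n = ν'_{n+1} ∘ Df(x_n) + ω_n for all n ∈ ℤ, then ν_n = ν'_n for all n ∈ ℤ. -/
open Function Set Filter MeasureTheory Topology

/-!
The difference `μ n := ν n - ν' n` of two bounded solutions solves the homogeneous equation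
`μ n = μ (n + 1) ∘ Df(x_n)`, hence `μ n = μ (n + k) ∘ Df^k(x_n)` for every `k ≥ 0`. On a stable
vector `v` this gives `|μ n v| ≤ (sup ‖μ‖) · C λ^k ‖v‖`; on an unstable vector `v` one writes
`v = Df^k(x_{n-k}) (Dg^k(x_n) v)` and gets the same bound. Letting `k → ∞`, `μ n` vanishes on
`V^s(x_n)` and on `V^u(x_n)`, which span `E`.
-/

theorem eq_zero_of_norm_le_mul_pow {F : Type*} [NormedAddCommGroup F] {a : F} {c lam : ℝ}
    (hlam0 : 0 ≤ lam) (hlam1 : lam < 1) (h : ∀ k : ℕ, ‖a‖ ≤ c * lam ^ k) : a = 0 := by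
  have hlim : Tendsto (fun k : ℕ => c * lam ^ k) atTop (𝓝 0) := by
    simpa using (tendsto_pow_atTop_nhds_zero_of_lt_one hlam0 hlam1).const_mul c
  exact norm_le_zero_iff.mp (ge_of_tendsto' hlim h)

section Orbit

variable {α : Type*} {f : α → α} {orb : ℤ → α}

theorem orbit_add_nat (horb : ∀ n : ℤ, orb (n + 1) = f (orb n)) (k : ℕ) (n : ℤ) :
    orb (n + k) = f^[k] (orb n) := by
  induction k with
  | zero => simp
  | succ k ih =>
    rw [Nat.cast_succ, ← add_assoc, horb, ih, iterate_succ_apply']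

theorem orbit_mem_of_image_eq {K : Set α} (hinj : Injective f) (hfK : f '' K = K)
    (horb : ∀ n : ℤ, orb (n + 1) = f (orb n)) (h0 : orb 0 ∈ K) (n : ℤ) : orb n ∈ K := by
  have hstep : ∀ m : ℤ, orb (m + 1) ∈ K ↔ orb m ∈ K := fun m => by
    rw [horb]
    nth_rewrite 1 [← hfK]
    exact hinj.mem_set_image
  induction n using Int.induction_on with
  | zero => exact h0
  | succ m ih => exact (hstep m).mpr ih
  | pred m ih => exact (hstep _).mp (by rwa [sub_add_cancel])

end Orbit

section AdjointCocycle

variable {𝕜 E F : Type*} [NontriviallyNormedField 𝕜]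
  [NormedAddCommGroup E] [NormedSpace 𝕜 E] [NormedAddCommGroup F] [NormedSpace 𝕜 F]
  {f g : E → E} {orb : ℤ → E} {μ : ℤ → E →L[𝕜] F}

theorem fderiv_apply_fderiv_of_rightInverse (hfg : RightInverse g f)
    (hf : Differentiable 𝕜 f) (hg : Differentiable 𝕜 g) (x v : E) :
    fderiv 𝕜 f (g x) (fderiv 𝕜 g x v) = v := by
  have hcomp := fderiv_comp x (hf (g x)) (hg x)
  rw [hfg.comp_eq_id, fderiv_id] at hcomp
  exact (congrArg (· v) hcomp).symm

theorem eq_comp_fderiv_iterate (hf : Differentiable 𝕜 f)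
    (horb : ∀ n : ℤ, orb (n + 1) = f (orb n))
    (hμ : ∀ n : ℤ, μ n = (μ (n + 1)).comp (fderiv 𝕜 f (orb n))) (k : ℕ) (n : ℤ) :
    μ n = (μ (n + k)).comp (fderiv 𝕜 f^[k] (orb n)) := by
  induction k generalizing n with
  | zero => simp
  | succ k ih =>
    rw [hμ n, ih (n + 1), ContinuousLinearMap.comp_assoc, horb,
      ← fderiv_comp _ ((hf.iterate k) _) (hf _), ← iterate_succ, Nat.cast_succ, ← add_assoc,
      add_right_comm]

theorem apply_eq_zero_of_small_representatives {ι : Type*} {ν : ι → E →L[𝕜] F} {M C lam : ℝ}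
    (hM : ∀ i, ‖ν i‖ ≤ M) (hlam0 : 0 ≤ lam) (hlam1 : lam < 1) {i : ι} {v : E}
    (h : ∀ k : ℕ, ∃ j w, ν i v = ν j w ∧ ‖w‖ ≤ C * lam ^ k * ‖v‖) : ν i v = 0 := by
  refine eq_zero_of_norm_le_mul_pow (c := M * C * ‖v‖) hlam0 hlam1 fun k => ?_
  obtain ⟨j, w, hvw, hw⟩ := h k
  calc ‖ν i v‖ = ‖ν j w‖ := by rw [hvw]
    _ ≤ M * ‖w‖ := (ν j).le_of_opNorm_le (hM j) w
    _ ≤ M * (C * lam ^ k * ‖v‖) := mul_le_mul_of_nonneg_left hw ((norm_nonneg _).trans (hM i))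
    _ = M * C * ‖v‖ * lam ^ k := by ring

variable {C lam : ℝ} (hf : Differentiable 𝕜 f) (horb : ∀ n : ℤ, orb (n + 1) = f (orb n))
  (hμ : ∀ n : ℤ, μ n = (μ (n + 1)).comp (fderiv 𝕜 f (orb n)))
include hf horb hμ

theorem exists_small_representative_of_forward_contraction {n : ℤ} {v : E}
    (hv : ∀ k : ℕ, ‖fderiv 𝕜 f^[k] (orb n) v‖ ≤ C * lam ^ k * ‖v‖) (k : ℕ) :
    ∃ m w, μ n v = μ m w ∧ ‖w‖ ≤ C * lam ^ k * ‖v‖ :=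
  ⟨n + k, _, by rw [eq_comp_fderiv_iterate hf horb hμ k n, ContinuousLinearMap.comp_apply], hv k⟩

theorem exists_small_representative_of_backward_contraction (hgf : LeftInverse g f)
    (hfg : RightInverse g f) (hg : Differentiable 𝕜 g) {n : ℤ} {v : E}
    (hv : ∀ k : ℕ, ‖fderiv 𝕜 g^[k] (orb n) v‖ ≤ C * lam ^ k * ‖v‖) (k : ℕ) :
    ∃ m w, μ n v = μ m w ∧ ‖w‖ ≤ C * lam ^ k * ‖v‖ := by
  refine ⟨n - k, _, ?_, hv k⟩
  have hg_orb : g^[k] (orb n) = orb (n - k) := by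
    rw [← hgf.iterate k (orb (n - k)), ← orbit_add_nat horb, sub_add_cancel]
  have hv_image : fderiv 𝕜 f^[k] (orb (n - k)) (fderiv 𝕜 g^[k] (orb n) v) = v := by
    rw [← hg_orb]
    exact fderiv_apply_fderiv_of_rightInverse (hfg.iterate k) (hf.iterate k) (hg.iterate k) _ v
  rw [eq_comp_fderiv_iterate hf horb hμ k (n - k), ContinuousLinearMap.comp_apply, hv_image,
    sub_add_cancel]

end AdjointCocycle

theorem adjoint_shadowing_uniqueness_discrete_general
    {E : Type*} [NormedAddCommGroup E] [NormedSpace ℝ E]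
    (f g : E → E) (hgf : Function.LeftInverse g f) (hfg : Function.RightInverse g f)
    (hf : ContDiff ℝ 1 f) (hg : ContDiff ℝ 1 g)
    (K : Set E) (hfK : f '' K = K)
    (Vs Vu : E → Submodule ℝ E)
    (hsplit : ∀ x ∈ K, IsCompl (Vs x) (Vu x))
    (C lam : ℝ) (hlam0 : 0 < lam) (hlam1 : lam < 1)
    (hyps : ∀ (n : ℕ), ∀ x ∈ K, ∀ v ∈ Vs x, ‖fderiv ℝ (f^[n]) x v‖ ≤ C * lam ^ n * ‖v‖)
    (hypu : ∀ (n : ℕ), ∀ x ∈ K, ∀ v ∈ Vu x, ‖fderiv ℝ (g^[n]) x v‖ ≤ C * lam ^ n * ‖v‖)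
    (orb : ℤ → E) (horb0 : orb 0 ∈ K) (horb : ∀ n : ℤ, orb (n + 1) = f (orb n))
    (ω : ℤ → E →L[ℝ] ℝ)
    (ν ν' : ℤ → E →L[ℝ] ℝ)
    (hνb : ∃ M : ℝ, ∀ n : ℤ, ‖ν n‖ ≤ M) (hν'b : ∃ M : ℝ, ∀ n : ℤ, ‖ν' n‖ ≤ M)
    (hν : ∀ n : ℤ, ν n = (ν (n + 1)).comp (fderiv ℝ f (orb n)) + ω n)
    (hν' : ∀ n : ℤ, ν' n = (ν' (n + 1)).comp (fderiv ℝ f (orb n)) + ω n) :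
    ∀ n : ℤ, ν n = ν' n := by
  intro n
  have hdf : Differentiable ℝ f := hf.differentiable one_ne_zero
  have hdg : Differentiable ℝ g := hg.differentiable one_ne_zero
  have horbK := orbit_mem_of_image_eq hgf.injective hfK horb horb0
  have hμ : ∀ m, (ν - ν') m = ((ν - ν') (m + 1)).comp (fderiv ℝ f (orb m)) := fun m => by
    rw [Pi.sub_apply, Pi.sub_apply, hν m, hν' m, ContinuousLinearMap.sub_comp,
      add_sub_add_right_eq_sub]
  obtain ⟨M, hM⟩ := hνb
  obtain ⟨M', hM'⟩ := hν'b
  have hμb : ∀ m, ‖(ν - ν') m‖ ≤ M + M' := fun m =>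
    (norm_sub_le _ _).trans (add_le_add (hM m) (hM' m))
  rw [← sub_eq_zero]
  refine LinearMap.ext_on_codisjoint (hsplit _ (horbK n)).codisjoint (fun v hv => ?_)
    (fun v hv => ?_)
  · exact apply_eq_zero_of_small_representatives hμb hlam0.le hlam1
      (exists_small_representative_of_forward_contraction hdf horb hμ (hyps · _ (horbK n) v hv))
  · exact apply_eq_zero_of_small_representatives hμb hlam0.le hlam1
      (exists_small_representative_of_backward_contraction hdf horb hμ hgf hfg hdg
        (hypu · _ (horbK n) v hv))

theorem adjoint_shadowing_uniqueness_discrete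
    {E : Type*} [NormedAddCommGroup E] [NormedSpace ℝ E] [FiniteDimensional ℝ E]
    (f g : E → E) (hgf : Function.LeftInverse g f) (hfg : Function.RightInverse g f)
    (hf : ContDiff ℝ 1 f) (hg : ContDiff ℝ 1 g)
    (K : Set E) (hKc : IsCompact K) (hfK : f '' K = K)
    (Vs Vu : E → Submodule ℝ E)
    (hsplit : ∀ x ∈ K, IsCompl (Vs x) (Vu x))
    (hequivs : ∀ x ∈ K, (Vs x).map (fderiv ℝ f x : E →ₗ[ℝ] E) = Vs (f x))
    (hequivu : ∀ x ∈ K, (Vu x).map (fderiv ℝ f x : E →ₗ[ℝ] E) = Vu (f x))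
    (C lam : ℝ) (hC : 0 < C) (hlam0 : 0 < lam) (hlam1 : lam < 1)
    (hyps : ∀ (n : ℕ), ∀ x ∈ K, ∀ v ∈ Vs x, ‖fderiv ℝ (f^[n]) x v‖ ≤ C * lam ^ n * ‖v‖)
    (hypu : ∀ (n : ℕ), ∀ x ∈ K, ∀ v ∈ Vu x, ‖fderiv ℝ (g^[n]) x v‖ ≤ C * lam ^ n * ‖v‖)
    (Ps Pu : E → E →L[ℝ] E)
    (hproj : ∀ x ∈ K, ∀ v : E, Ps x v ∈ Vs x ∧ Pu x v ∈ Vu x ∧ Ps x v + Pu x v = v)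
    (hPbdd : ∃ M : ℝ, ∀ x ∈ K, ‖Ps x‖ + ‖Pu x‖ ≤ M)
    (orb : ℤ → E) (horb0 : orb 0 ∈ K) (horb : ∀ n : ℤ, orb (n + 1) = f (orb n))
    (ω : ℤ → E →L[ℝ] ℝ) (hωb : ∃ M : ℝ, ∀ n : ℤ, ‖ω n‖ ≤ M)
    (ν ν' : ℤ → E →L[ℝ] ℝ)
    (hνb : ∃ M : ℝ, ∀ n : ℤ, ‖ν n‖ ≤ M) (hν'b : ∃ M : ℝ, ∀ n : ℤ, ‖ν' n‖ ≤ M)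
    (hν : ∀ n : ℤ, ν n = (ν (n + 1)).comp (fderiv ℝ f (orb n)) + ω n)
    (hν' : ∀ n : ℤ, ν' n = (ν' (n + 1)).comp (fderiv ℝ f (orb n)) + ω n) :
    ∀ n : ℤ, ν n = ν' n :=
  adjoint_shadowing_uniqueness_discrete_general f g hgf hfg hf hg K hfK Vs Vu hsplit C lam hlam0
    hlam1 hyps hypu orb horb0 horb ω ν ν' hνb hν'b hν hν'
end

section
/- Suppose additionally that x ↦ P^s(x) and x ↦ P^u(x) are continuous on K, let ρ be an f-invariant Borel probability measure on K, let X be a continuous vector field on K and ω a continuous covector field on K. Define S(X)(x) := Σ_{k≥0} Df^k(f^{-k}x) P^s(f^{-k}x) X(f^{-k}x) − Σ_{k≥1} Df^{-k}(f^{k}x) P^u(f^{k}x) X(f^{k}x) and 𝒮(ω)(x) := Σ_{k≥0} ω(f^k x) ∘ P^s(f^k x) ∘ Df^k(x) − Σ_{k≥1} ω(f^{-k} x) ∘ P^u(f^{-k} x) ∘ Df^{-k}(x). Then ∫_K ω(x)(S(X)(x)) dρ(x) = ∫_K (𝒮(ω)(x))(X(x)) dρ(x); that is, 𝒮 is the adjoint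 of the linear shadowing operator S with respect to ρ. -/
open Function Set Filter MeasureTheory Topology

/-!
Both operators are series over `n` of a stable term for `f^n` minus an unstable term for `f^{-n}`.
For a single `n`, substituting `x = f^n y` (`ρ` is `f`-invariant) turns
`∫ ω x (Df^n(f^{-n} x) P^s X(f^{-n} x))` into `∫ ω(f^n y)(Df^n(y) P^s(y) X(y))`, and equivariance
of the splitting gives `Df^n(y) ∘ P^s(y) = P^s(f^n y) ∘ Df^n(y)`, which is the `n`-th term of the
adjoint series paired with `X y`. The unstable terms are the stable terms of `f⁻¹`, which also
preserves `ρ`. Exponential contraction bounds all terms on `K` by a geometric sequence, so the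
series converge uniformly on `K` and may be integrated termwise; and since `f '' K = K`,
restricting `ρ` to `K` keeps it invariant.
-/

theorem Submodule.eq_and_eq_of_add_eq_add_of_disjoint {R M : Type*} [Ring R] [AddCommGroup M]
    [Module R M] {V W : Submodule R M} (h : Disjoint V W) {a a' b b' : M} (ha : a ∈ V)
    (ha' : a' ∈ V) (hb : b ∈ W) (hb' : b' ∈ W) (hab : a + b = a' + b') : a = a' ∧ b = b' := by
  have hW : a - a' ∈ W := by
    rw [sub_eq_sub_iff_add_eq_add.mpr (hab.trans (add_comm _ _))]
    exact W.sub_mem hb' hb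
  obtain rfl : a = a' := sub_eq_zero.mp (Submodule.disjoint_def.mp h _ (V.sub_mem ha ha') hW)
  exact ⟨rfl, add_left_cancel hab⟩

section Calculus

variable {𝕜 E : Type*} [NontriviallyNormedField 𝕜] [NormedAddCommGroup E] [NormedSpace 𝕜 E]

protected theorem ContDiff.iterate {f : E → E} {n : WithTop ℕ∞} (hf : ContDiff 𝕜 n f) (k : ℕ) :
    ContDiff 𝕜 n f^[k] := by
  induction k with
  | zero => exact contDiff_id
  | succ k ih => rw [iterate_succ']; exact hf.comp ih

theorem Function.LeftInverse.fderiv_apply_fderiv_apply {f g : E → E} (hgf : LeftInverse g f)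
    (hf : Differentiable 𝕜 f) (hg : Differentiable 𝕜 g) (x v : E) :
    fderiv 𝕜 g (f x) (fderiv 𝕜 f x v) = v := by
  rw [← ContinuousLinearMap.comp_apply, ← fderiv_comp x (hg _) (hf x), hgf.comp_eq_id, fderiv_id,
    ContinuousLinearMap.id_apply]

theorem fderiv_iterate_apply_mem {f : E → E} {K : Set E} {V : E → Submodule 𝕜 E}
    (hf : Differentiable 𝕜 f) (hK : MapsTo f K K)
    (hV : ∀ x ∈ K, ∀ v ∈ V x, fderiv 𝕜 f x v ∈ V (f x)) (n : ℕ) {x : E} (hx : x ∈ K) {v : E}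
    (hv : v ∈ V x) : fderiv 𝕜 f^[n] x v ∈ V (f^[n] x) := by
  induction n with
  | zero => simpa using hv
  | succ n ih =>
    rw [iterate_succ', fderiv_comp x (hf _) (hf.iterate n x)]
    exact hV _ (hK.iterate n hx) _ ih

theorem fderiv_apply_mem_of_map_fderiv_eq {f g : E → E} {K : Set E} {V : E → Submodule 𝕜 E}
    (hgf : LeftInverse g f) (hfg : RightInverse g f) (hf : Differentiable 𝕜 f)
    (hg : Differentiable 𝕜 g) (hgK : MapsTo g K K)
    (hV : ∀ x ∈ K, (V x).map (fderiv 𝕜 f x : E →ₗ[𝕜] E) = V (f x)) :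
    ∀ y ∈ K, ∀ w ∈ V y, fderiv 𝕜 g y w ∈ V (g y) := by
  intro y hy w hw
  obtain ⟨v, hv, rfl⟩ : w ∈ (V (g y)).map (fderiv 𝕜 f (g y) : E →ₗ[𝕜] E) := by
    rwa [hV _ (hgK hy), hfg y]
  have hinv := hgf.fderiv_apply_fderiv_apply hf hg (g y) v
  rw [hfg y] at hinv
  rwa [ContinuousLinearMap.coe_coe, hinv]

theorem apply_fderiv_iterate_eq_fderiv_iterate_apply {f : E → E} {K : Set E}
    {V W : E → Submodule 𝕜 E} {P Q : E → E →L[𝕜] E} (hf : Differentiable 𝕜 f) (hK : MapsTo f K K)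
    (hV : ∀ x ∈ K, ∀ v ∈ V x, fderiv 𝕜 f x v ∈ V (f x))
    (hW : ∀ x ∈ K, ∀ v ∈ W x, fderiv 𝕜 f x v ∈ W (f x)) (hVW : ∀ x ∈ K, Disjoint (V x) (W x))
    (hPQ : ∀ x ∈ K, ∀ v, P x v ∈ V x ∧ Q x v ∈ W x ∧ P x v + Q x v = v) (n : ℕ) {x : E}
    (hx : x ∈ K) (v : E) :
    P (f^[n] x) (fderiv 𝕜 f^[n] x v) = fderiv 𝕜 f^[n] x (P x v) := by
  obtain ⟨hPv, hQv, hv⟩ := hPQ x hx v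
  obtain ⟨hPv', hQv', hv'⟩ := hPQ _ (hK.iterate n hx) (fderiv 𝕜 f^[n] x v)
  refine (Submodule.eq_and_eq_of_add_eq_add_of_disjoint (hVW _ (hK.iterate n hx)) hPv'
    (fderiv_iterate_apply_mem hf hK hV n hx hPv) hQv'
    (fderiv_iterate_apply_mem hf hK hW n hx hQv) ?_).1
  rw [hv', ← map_add, hv]

end Calculus

theorem integral_tsum_of_norm_le {α G : Type*} [MeasurableSpace α] [NormedAddCommGroup G]
    [NormedSpace ℝ G] {μ : Measure α} [IsFiniteMeasure μ] {F : ℕ → α → G} {u : ℕ → ℝ}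
    (hF : ∀ n, Integrable (F n) μ) (hu : Summable u) (hFu : ∀ n, ∀ᵐ x ∂μ, ‖F n x‖ ≤ u n) :
    ∫ x, ∑' n, F n x ∂μ = ∑' n, ∫ x, F n x ∂μ := by
  refine (integral_tsum_of_summable_integral_norm hF <| Summable.of_nonneg_of_le
    (fun n => integral_nonneg fun x => norm_nonneg _) (fun n => ?_)
    (hu.mul_left (μ.real univ))).symm
  calc ∫ x, ‖F n x‖ ∂μ ≤ ∫ _, u n ∂μ := integral_mono_ae (hF n).norm (integrable_const _) (hFu n)
    _ = μ.real univ * u n := by rw [integral_const, smul_eq_mul]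

theorem ContinuousOn.integrable_of_ae_mem {α G : Type*} [MeasurableSpace α] [TopologicalSpace α]
    [OpensMeasurableSpace α] [T2Space α] [NormedAddCommGroup G] {μ : Measure α}
    [IsFiniteMeasureOnCompacts μ] {K : Set α} {h : α → G} (hh : ContinuousOn h K)
    (hK : IsCompact K) (hμK : ∀ᵐ x ∂μ, x ∈ K) : Integrable h μ := by
  simpa only [IntegrableOn, Measure.restrict_eq_self_of_ae_mem hμK] using
    hh.integrableOn_compact (μ := μ) hK

section Shadowing

variable {E : Type*} [NormedAddCommGroup E] [NormedSpace ℝ E]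

noncomputable def pushforwardIterate (F G : E → E) (Y : E → E) (n : ℕ) (x : E) : E :=
  fderiv ℝ F^[n] (G^[n] x) (Y (G^[n] x))

noncomputable def pullbackIterate (F : E → E) (η : E → E →L[ℝ] ℝ) (n : ℕ) (x : E) : E →L[ℝ] ℝ :=
  (η (F^[n] x)).comp (fderiv ℝ F^[n] x)

noncomputable def shadowingOperator (F G : E → E) (P Q : E → E →L[ℝ] E) (X : E → E) (x : E) : E :=
  (∑' k, pushforwardIterate F G (fun y => P y (X y)) k x) -
    ∑' k, pushforwardIterate G F (fun y => Q y (X y)) (k + 1) x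

noncomputable def shadowingAdjoint (F G : E → E) (P Q : E → E →L[ℝ] E) (ω : E → E →L[ℝ] ℝ)
    (x : E) : E →L[ℝ] ℝ :=
  (∑' k, pullbackIterate F (fun y => (ω y).comp (P y)) k x) -
    ∑' k, pullbackIterate G (fun y => (ω y).comp (Q y)) (k + 1) x

variable {F G : E → E} {K : Set E}

theorem continuousOn_pushforwardIterate {Y : E → E} (hF : ContDiff ℝ 1 F) (hG : Continuous G)
    (hGK : MapsTo G K K) (hY : ContinuousOn Y K) (n : ℕ) :
    ContinuousOn (pushforwardIterate F G Y n) K :=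
  (((hF.iterate n).continuous_fderiv one_ne_zero).continuousOn.clm_apply hY).comp
    (hG.iterate n).continuousOn (hGK.iterate n)

theorem continuousOn_pullbackIterate {η : E → E →L[ℝ] ℝ} (hF : ContDiff ℝ 1 F)
    (hFK : MapsTo F K K) (hη : ContinuousOn η K) (n : ℕ) :
    ContinuousOn (pullbackIterate F η n) K :=
  (hη.comp (hF.continuous.iterate n).continuousOn (hFK.iterate n)).clm_comp
    ((hF.iterate n).continuous_fderiv one_ne_zero).continuousOn

theorem integral_apply_pushforwardIterate [MeasurableSpace E] {μ : Measure E}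
    (hGF : LeftInverse G F) (hμ : MeasurePreserving F μ μ) {Y : E → E} {ω : E → E →L[ℝ] ℝ}
    (n : ℕ) (hm : AEStronglyMeasurable (fun x => ω x (pushforwardIterate F G Y n x)) μ) :
    ∫ x, ω x (pushforwardIterate F G Y n x) ∂μ = ∫ x, pullbackIterate F ω n x (Y x) ∂μ := by
  have hμn := hμ.iterate n
  rw [← hμn.map_eq] at hm
  calc ∫ x, ω x (pushforwardIterate F G Y n x) ∂μ
      = ∫ x, ω x (pushforwardIterate F G Y n x) ∂(μ.map F^[n]) := by rw [hμn.map_eq]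
    _ = ∫ x, pullbackIterate F ω n x (Y x) ∂μ := by
      rw [integral_map hμn.aemeasurable hm]
      simp only [pushforwardIterate, pullbackIterate, hGF.iterate n _,
        ContinuousLinearMap.comp_apply]

structure IsStableProjection (F G : E → E) (K : Set E) (P : E → E →L[ℝ] E) (C lam : ℝ) :
    Prop where
  leftInverse : LeftInverse G F
  contDiff : ContDiff ℝ 1 F
  continuous_inv : Continuous G
  isCompact : IsCompact K
  mapsTo : MapsTo F K K
  mapsTo_inv : MapsTo G K K
  continuousOn : ContinuousOn P K
  comm : ∀ n, ∀ x ∈ K, ∀ v, P (F^[n] x) (fderiv ℝ F^[n] x v) = fderiv ℝ F^[n] x (P x v)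
  norm_le : ∀ n, ∀ x ∈ K, ∀ v, ‖fderiv ℝ F^[n] x (P x v)‖ ≤ C * lam ^ n * ‖P x v‖
  const_nonneg : 0 ≤ C
  rate_nonneg : 0 ≤ lam
  rate_lt_one : lam < 1

namespace IsStableProjection

variable {P : E → E →L[ℝ] E} {C lam : ℝ}

theorem of_splitting {V W : E → Submodule ℝ E} {Q : E → E →L[ℝ] E} (hGF : LeftInverse G F)
    (hF : ContDiff ℝ 1 F) (hG : Continuous G) (hK : IsCompact K) (hFK : MapsTo F K K)
    (hGK : MapsTo G K K) (hV : ∀ x ∈ K, ∀ v ∈ V x, fderiv ℝ F x v ∈ V (F x))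
    (hW : ∀ x ∈ K, ∀ v ∈ W x, fderiv ℝ F x v ∈ W (F x)) (hVW : ∀ x ∈ K, Disjoint (V x) (W x))
    (hPQ : ∀ x ∈ K, ∀ v, P x v ∈ V x ∧ Q x v ∈ W x ∧ P x v + Q x v = v)
    (hPc : ContinuousOn P K) (hC : 0 ≤ C) (hlam0 : 0 ≤ lam) (hlam1 : lam < 1)
    (hcontr : ∀ n, ∀ x ∈ K, ∀ v ∈ V x, ‖fderiv ℝ F^[n] x v‖ ≤ C * lam ^ n * ‖v‖) :
    IsStableProjection F G K P C lam :=
  ⟨hGF, hF, hG, hK, hFK, hGK, hPc,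
    fun n _ hx => apply_fderiv_iterate_eq_fderiv_iterate_apply (hF.differentiable one_ne_zero) hFK
      hV hW hVW hPQ n hx,
    fun n x hx v => hcontr n x hx _ (hPQ x hx v).1, hC, hlam0, hlam1⟩

theorem coeff_nonneg (hP : IsStableProjection F G K P C lam) (n : ℕ) : 0 ≤ C * lam ^ n :=
  mul_nonneg hP.const_nonneg (pow_nonneg hP.rate_nonneg n)

theorem summable_rate_pow_add (hP : IsStableProjection F G K P C lam) (m : ℕ) :
    Summable fun k => lam ^ (k + m) :=
  (summable_nat_add_iff m).mpr (summable_geometric_of_lt_one hP.rate_nonneg hP.rate_lt_one)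

theorem exists_norm_pushforwardIterate_le (hP : IsStableProjection F G K P C lam) {X : E → E}
    (hX : ContinuousOn X K) :
    ∃ B, ∀ n, ∀ x ∈ K, ‖pushforwardIterate F G (fun y => P y (X y)) n x‖ ≤ B * lam ^ n := by
  obtain ⟨B, hB⟩ := hP.isCompact.exists_bound_of_continuousOn (hP.continuousOn.clm_apply hX)
  refine ⟨C * B, fun n x hx => ?_⟩
  have hy := hP.mapsTo_inv.iterate n hx
  calc ‖pushforwardIterate F G (fun y => P y (X y)) n x‖
      ≤ C * lam ^ n * ‖P (G^[n] x) (X (G^[n] x))‖ := hP.norm_le n _ hy _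
    _ ≤ C * lam ^ n * B := mul_le_mul_of_nonneg_left (hB _ hy) (hP.coeff_nonneg n)
    _ = C * B * lam ^ n := by ring

theorem pullbackIterate_comp_eq (hP : IsStableProjection F G K P C lam) (ω : E → E →L[ℝ] ℝ)
    (n : ℕ) {x : E} (hx : x ∈ K) :
    pullbackIterate F (fun y => (ω y).comp (P y)) n x =
      (ω (F^[n] x)).comp ((fderiv ℝ F^[n] x).comp (P x)) := by
  ext v
  exact congrArg (ω (F^[n] x)) (hP.comm n x hx v)

theorem exists_norm_pullbackIterate_le (hP : IsStableProjection F G K P C lam)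
    {ω : E → E →L[ℝ] ℝ} (hω : ContinuousOn ω K) :
    ∃ B, ∀ n, ∀ x ∈ K, ‖pullbackIterate F (fun y => (ω y).comp (P y)) n x‖ ≤ B * lam ^ n := by
  obtain ⟨Mω, hMω⟩ := hP.isCompact.exists_bound_of_continuousOn hω
  obtain ⟨MP, hMP⟩ := hP.isCompact.exists_bound_of_continuousOn hP.continuousOn
  refine ⟨Mω * (C * MP), fun n x hx => ?_⟩
  have hDP : ‖(fderiv ℝ F^[n] x).comp (P x)‖ ≤ C * lam ^ n * MP := by
    refine ContinuousLinearMap.opNorm_le_bound _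
      (mul_nonneg (hP.coeff_nonneg n) ((norm_nonneg _).trans (hMP x hx))) fun v => ?_
    calc ‖fderiv ℝ F^[n] x (P x v)‖ ≤ C * lam ^ n * ‖P x v‖ := hP.norm_le n x hx v
      _ ≤ C * lam ^ n * (MP * ‖v‖) :=
        mul_le_mul_of_nonneg_left ((P x).le_of_opNorm_le (hMP x hx) v) (hP.coeff_nonneg n)
      _ = C * lam ^ n * MP * ‖v‖ := by ring
  have hωn := hMω _ (hP.mapsTo.iterate n hx)
  calc ‖pullbackIterate F (fun y => (ω y).comp (P y)) n x‖
      ≤ ‖ω (F^[n] x)‖ * ‖(fderiv ℝ F^[n] x).comp (P x)‖ := by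
        rw [hP.pullbackIterate_comp_eq ω n hx]; exact ContinuousLinearMap.opNorm_comp_le _ _
    _ ≤ Mω * (C * lam ^ n * MP) := mul_le_mul hωn hDP (norm_nonneg _) ((norm_nonneg _).trans hωn)
    _ = Mω * (C * MP) * lam ^ n := by ring

theorem continuousOn_tsum_pushforwardIterate [CompleteSpace E]
    (hP : IsStableProjection F G K P C lam) {X : E → E} (hX : ContinuousOn X K) (m : ℕ) :
    ContinuousOn (fun x => ∑' k, pushforwardIterate F G (fun y => P y (X y)) (k + m) x) K := by
  obtain ⟨B, hB⟩ := hP.exists_norm_pushforwardIterate_le hX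
  exact continuousOn_tsum (fun k => continuousOn_pushforwardIterate hP.contDiff hP.continuous_inv
    hP.mapsTo_inv (hP.continuousOn.clm_apply hX) (k + m)) ((hP.summable_rate_pow_add m).mul_left B)
    fun k => hB (k + m)

theorem continuousOn_tsum_pullbackIterate (hP : IsStableProjection F G K P C lam)
    {ω : E → E →L[ℝ] ℝ} (hω : ContinuousOn ω K) (m : ℕ) :
    ContinuousOn (fun x => ∑' k, pullbackIterate F (fun y => (ω y).comp (P y)) (k + m) x) K := by
  obtain ⟨B, hB⟩ := hP.exists_norm_pullbackIterate_le hω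
  exact continuousOn_tsum (fun k => continuousOn_pullbackIterate hP.contDiff hP.mapsTo
    (hω.clm_comp hP.continuousOn) (k + m)) ((hP.summable_rate_pow_add m).mul_left B)
    fun k => hB (k + m)

theorem continuousOn_apply_pushforwardIterate (hP : IsStableProjection F G K P C lam)
    {X : E → E} (hX : ContinuousOn X K) {ω : E → E →L[ℝ] ℝ} (hω : ContinuousOn ω K) (n : ℕ) :
    ContinuousOn (fun x => ω x (pushforwardIterate F G (fun y => P y (X y)) n x)) K :=
  hω.clm_apply (continuousOn_pushforwardIterate hP.contDiff hP.continuous_inv hP.mapsTo_inv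
    (hP.continuousOn.clm_apply hX) n)

variable [MeasurableSpace E] [BorelSpace E] {μ : Measure E} [IsFiniteMeasure μ]

theorem integral_apply_tsum_pushforwardIterate_eq_tsum [CompleteSpace E]
    (hP : IsStableProjection F G K P C lam) (hμK : ∀ᵐ x ∂μ, x ∈ K) {X : E → E}
    (hX : ContinuousOn X K) {ω : E → E →L[ℝ] ℝ} (hω : ContinuousOn ω K) (m : ℕ) :
    ∫ x, ω x (∑' k, pushforwardIterate F G (fun y => P y (X y)) (k + m) x) ∂μ =
      ∑' k, ∫ x, ω x (pushforwardIterate F G (fun y => P y (X y)) (k + m) x) ∂μ := by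
  obtain ⟨B, hB⟩ := hP.exists_norm_pushforwardIterate_le hX
  obtain ⟨Mω, hMω⟩ := hP.isCompact.exists_bound_of_continuousOn hω
  have hu := (hP.summable_rate_pow_add m).mul_left B
  rw [← integral_tsum_of_norm_le (fun k => ?_) (hu.mul_left Mω) fun k => hμK.mono fun x hx =>
    (ω x).le_of_opNorm_le_of_le (hMω x hx) (hB _ x hx)]
  · exact integral_congr_ae <| hμK.mono fun x hx =>
      (ω x).map_tsum (.of_norm_bounded hu fun k => hB _ x hx)
  · exact (hP.continuousOn_apply_pushforwardIterate hX hω _).integrable_of_ae_mem hP.isCompact hμK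

theorem integral_tsum_pullbackIterate_apply_eq_tsum (hP : IsStableProjection F G K P C lam)
    (hμK : ∀ᵐ x ∂μ, x ∈ K) {X : E → E} (hX : ContinuousOn X K) {ω : E → E →L[ℝ] ℝ}
    (hω : ContinuousOn ω K) (m : ℕ) :
    ∫ x, (∑' k, pullbackIterate F (fun y => (ω y).comp (P y)) (k + m) x) (X x) ∂μ =
      ∑' k, ∫ x, pullbackIterate F (fun y => (ω y).comp (P y)) (k + m) x (X x) ∂μ := by
  obtain ⟨B, hB⟩ := hP.exists_norm_pullbackIterate_le hω
  obtain ⟨MX, hMX⟩ := hP.isCompact.exists_bound_of_continuousOn hX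
  have hu := (hP.summable_rate_pow_add m).mul_left B
  rw [← integral_tsum_of_norm_le (fun k => ?_) (hu.mul_right MX) fun k => hμK.mono fun x hx =>
    ContinuousLinearMap.le_of_opNorm_le_of_le _ (hB _ x hx) (hMX x hx)]
  · exact integral_congr_ae <| hμK.mono fun x hx =>
      (ContinuousLinearMap.apply ℝ ℝ (X x)).map_tsum (.of_norm_bounded hu fun k => hB _ x hx)
  · exact ((continuousOn_pullbackIterate hP.contDiff hP.mapsTo (hω.clm_comp hP.continuousOn)
      _).clm_apply hX).integrable_of_ae_mem hP.isCompact hμK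

theorem integral_apply_tsum_pushforwardIterate [CompleteSpace E]
    (hP : IsStableProjection F G K P C lam) (hμ : MeasurePreserving F μ μ)
    (hμK : ∀ᵐ x ∂μ, x ∈ K) {X : E → E} (hX : ContinuousOn X K) {ω : E → E →L[ℝ] ℝ}
    (hω : ContinuousOn ω K) (m : ℕ) :
    ∫ x, ω x (∑' k, pushforwardIterate F G (fun y => P y (X y)) (k + m) x) ∂μ =
      ∫ x, (∑' k, pullbackIterate F (fun y => (ω y).comp (P y)) (k + m) x) (X x) ∂μ := by
  rw [hP.integral_apply_tsum_pushforwardIterate_eq_tsum hμK hX hω,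
    hP.integral_tsum_pullbackIterate_apply_eq_tsum hμK hX hω]
  refine tsum_congr fun k => ?_
  rw [integral_apply_pushforwardIterate hP.leftInverse hμ _ ?_]
  · exact integral_congr_ae <| hμK.mono fun x hx =>
      congrArg (ω _) (hP.comm _ x hx (X x)).symm
  · exact ((hP.continuousOn_apply_pushforwardIterate hX hω _).integrable_of_ae_mem
      hP.isCompact hμK).aestronglyMeasurable

end IsStableProjection

theorem integral_apply_shadowingOperator [CompleteSpace E] [MeasurableSpace E] [BorelSpace E]
    {μ : Measure E} [IsFiniteMeasure μ] {P Q : E → E →L[ℝ] E} {C lam : ℝ}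
    (hP : IsStableProjection F G K P C lam) (hQ : IsStableProjection G F K Q C lam)
    (hμF : MeasurePreserving F μ μ) (hμG : MeasurePreserving G μ μ) (hμK : ∀ᵐ x ∂μ, x ∈ K)
    {X : E → E} (hX : ContinuousOn X K) {ω : E → E →L[ℝ] ℝ} (hω : ContinuousOn ω K) :
    ∫ x, ω x (shadowingOperator F G P Q X x) ∂μ = ∫ x, shadowingAdjoint F G P Q ω x (X x) ∂μ := by
  have hint {h : E → ℝ} (hh : ContinuousOn h K) : Integrable h μ :=
    hh.integrable_of_ae_mem hP.isCompact hμK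
  simp only [shadowingOperator, shadowingAdjoint, map_sub, sub_apply]
  rw [integral_sub ?_ ?_, integral_sub ?_ ?_]
  · exact congrArg₂ (· - ·) (hP.integral_apply_tsum_pushforwardIterate hμF hμK hX hω 0)
      (hQ.integral_apply_tsum_pushforwardIterate hμG hμK hX hω 1)
  · exact hint ((hP.continuousOn_tsum_pullbackIterate hω 0).clm_apply hX)
  · exact hint ((hQ.continuousOn_tsum_pullbackIterate hω 1).clm_apply hX)
  · exact hint (hω.clm_apply (hP.continuousOn_tsum_pushforwardIterate hX 0))
  · exact hint (hω.clm_apply (hQ.continuousOn_tsum_pushforwardIterate hX 1))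

end Shadowing

theorem adjoint_duality_discrete_general
    {E : Type*} [NormedAddCommGroup E] [NormedSpace ℝ E] [FiniteDimensional ℝ E]
    (f g : E → E) (hgf : Function.LeftInverse g f) (hfg : Function.RightInverse g f)
    (hf : ContDiff ℝ 1 f) (hg : ContDiff ℝ 1 g)
    (K : Set E) (hKc : IsCompact K) (hfK : f '' K = K)
    (Vs Vu : E → Submodule ℝ E)
    (hsplit : ∀ x ∈ K, IsCompl (Vs x) (Vu x))
    (hequivs : ∀ x ∈ K, (Vs x).map (fderiv ℝ f x : E →ₗ[ℝ] E) = Vs (f x))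
    (hequivu : ∀ x ∈ K, (Vu x).map (fderiv ℝ f x : E →ₗ[ℝ] E) = Vu (f x))
    (C lam : ℝ) (hC : 0 < C) (hlam0 : 0 < lam) (hlam1 : lam < 1)
    (hyps : ∀ (n : ℕ), ∀ x ∈ K, ∀ v ∈ Vs x, ‖fderiv ℝ (f^[n]) x v‖ ≤ C * lam ^ n * ‖v‖)
    (hypu : ∀ (n : ℕ), ∀ x ∈ K, ∀ v ∈ Vu x, ‖fderiv ℝ (g^[n]) x v‖ ≤ C * lam ^ n * ‖v‖)
    (Ps Pu : E → E →L[ℝ] E)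
    (hproj : ∀ x ∈ K, ∀ v : E, Ps x v ∈ Vs x ∧ Pu x v ∈ Vu x ∧ Ps x v + Pu x v = v)
    [MeasurableSpace E] [BorelSpace E]
    (ρ : Measure E) [IsProbabilityMeasure ρ]
    (hρinv : ∀ A : Set E, MeasurableSet A → ρ (f ⁻¹' A) = ρ A)
    (hPsc : ContinuousOn Ps K) (hPuc : ContinuousOn Pu K)
    (X : E → E) (hXc : ContinuousOn X K)
    (ω : E → E →L[ℝ] ℝ) (hωc : ContinuousOn ω K)
    (SX : E → E)
    (hSX : ∀ x : E, SX x =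
      (∑' k : ℕ, fderiv ℝ (f^[k]) (g^[k] x) (Ps (g^[k] x) (X (g^[k] x)))) -
      ∑' k : ℕ, fderiv ℝ (g^[k+1]) (f^[k+1] x) (Pu (f^[k+1] x) (X (f^[k+1] x))))
    (Sω : E → E →L[ℝ] ℝ)
    (hSω : ∀ x : E, Sω x =
      (∑' k : ℕ, ((ω (f^[k] x)).comp (Ps (f^[k] x))).comp (fderiv ℝ (f^[k]) x)) -
      ∑' k : ℕ, ((ω (g^[k+1] x)).comp (Pu (g^[k+1] x))).comp (fderiv ℝ (g^[k+1]) x)) :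
    ∫ x in K, (ω x) (SX x) ∂ρ = ∫ x in K, (Sω x) (X x) ∂ρ := by
  have hdf : Differentiable ℝ f := hf.differentiable one_ne_zero
  have hdg : Differentiable ℝ g := hg.differentiable one_ne_zero
  have hfK' : MapsTo f K K := fun x hx => hfK.subset (mem_image_of_mem f hx)
  have hgK : MapsTo g K K := fun y hy => by
    obtain ⟨x, hx, rfl⟩ := hfK.symm.subset hy
    rwa [hgf x]
  have hP : IsStableProjection f g K Ps C lam := .of_splitting hgf hf hg.continuous hKc hfK' hgK
    (fun x hx v hv => hequivs x hx ▸ Submodule.mem_map_of_mem hv)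
    (fun x hx v hv => hequivu x hx ▸ Submodule.mem_map_of_mem hv)
    (fun x hx => (hsplit x hx).disjoint) hproj hPsc hC.le hlam0.le hlam1 hyps
  have hQ : IsStableProjection g f K Pu C lam := .of_splitting hfg hg hf.continuous hKc hgK hfK'
    (fderiv_apply_mem_of_map_fderiv_eq hgf hfg hdf hdg hgK hequivu)
    (fderiv_apply_mem_of_map_fderiv_eq hgf hfg hdf hdg hgK hequivs)
    (fun x hx => (hsplit x hx).disjoint.symm)
    (fun x hx v => let ⟨hs, hu, hv⟩ := hproj x hx v; ⟨hu, hs, (add_comm _ _).trans hv⟩)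
    hPuc hC.le hlam0.le hlam1 hypu
  let e : E ≃ᵐ E := ⟨⟨f, g, hgf, hfg⟩, hf.continuous.measurable, hg.continuous.measurable⟩
  have hρf : MeasurePreserving e ρ ρ :=
    ⟨e.measurable, Measure.ext fun A hA => by rw [e.map_apply]; exact hρinv A hA⟩
  have hμf : MeasurePreserving e (ρ.restrict K) (ρ.restrict K) := by
    simpa only [show ⇑e '' K = K from hfK] using hρf.restrict_image_emb e.measurableEmbedding K
  simp only [hSX, hSω]
  exact integral_apply_shadowingOperator hP hQ hμf (hμf.symm e)
    (ae_restrict_mem hKc.measurableSet) hXc hωc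

theorem adjoint_duality_discrete
    {E : Type*} [NormedAddCommGroup E] [NormedSpace ℝ E] [FiniteDimensional ℝ E]
    (f g : E → E) (hgf : Function.LeftInverse g f) (hfg : Function.RightInverse g f)
    (hf : ContDiff ℝ 1 f) (hg : ContDiff ℝ 1 g)
    (K : Set E) (hKc : IsCompact K) (hfK : f '' K = K)
    (Vs Vu : E → Submodule ℝ E)
    (hsplit : ∀ x ∈ K, IsCompl (Vs x) (Vu x))
    (hequivs : ∀ x ∈ K, (Vs x).map (fderiv ℝ f x : E →ₗ[ℝ] E) = Vs (f x))
    (hequivu : ∀ x ∈ K, (Vu x).map (fderiv ℝ f x : E →ₗ[ℝ] E) = Vu (f x))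
    (C lam : ℝ) (hC : 0 < C) (hlam0 : 0 < lam) (hlam1 : lam < 1)
    (hyps : ∀ (n : ℕ), ∀ x ∈ K, ∀ v ∈ Vs x, ‖fderiv ℝ (f^[n]) x v‖ ≤ C * lam ^ n * ‖v‖)
    (hypu : ∀ (n : ℕ), ∀ x ∈ K, ∀ v ∈ Vu x, ‖fderiv ℝ (g^[n]) x v‖ ≤ C * lam ^ n * ‖v‖)
    (Ps Pu : E → E →L[ℝ] E)
    (hproj : ∀ x ∈ K, ∀ v : E, Ps x v ∈ Vs x ∧ Pu x v ∈ Vu x ∧ Ps x v + Pu x v = v)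
    (hPbdd : ∃ M : ℝ, ∀ x ∈ K, ‖Ps x‖ + ‖Pu x‖ ≤ M)
    [MeasurableSpace E] [BorelSpace E]
    (ρ : Measure E) [IsProbabilityMeasure ρ] (hρK : ρ K = 1)
    (hρinv : ∀ A : Set E, MeasurableSet A → ρ (f ⁻¹' A) = ρ A)
    (hPsc : ContinuousOn Ps K) (hPuc : ContinuousOn Pu K)
    (X : E → E) (hXc : ContinuousOn X K)
    (ω : E → E →L[ℝ] ℝ) (hωc : ContinuousOn ω K)
    (SX : E → E)
    (hSX : ∀ x : E, SX x =
      (∑' k : ℕ, fderiv ℝ (f^[k]) (g^[k] x) (Ps (g^[k] x) (X (g^[k] x)))) -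
      ∑' k : ℕ, fderiv ℝ (g^[k+1]) (f^[k+1] x) (Pu (f^[k+1] x) (X (f^[k+1] x))))
    (Sω : E → E →L[ℝ] ℝ)
    (hSω : ∀ x : E, Sω x =
      (∑' k : ℕ, ((ω (f^[k] x)).comp (Ps (f^[k] x))).comp (fderiv ℝ (f^[k]) x)) -
      ∑' k : ℕ, ((ω (g^[k+1] x)).comp (Pu (g^[k+1] x))).comp (fderiv ℝ (g^[k+1]) x)) :
    ∫ x in K, (ω x) (SX x) ∂ρ = ∫ x in K, (Sω x) (X x) ∂ρ :=
  adjoint_duality_discrete_general f g hgf hfg hf hg K hKc hfK Vs Vu hsplit hequivs hequivu C lam hC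
    hlam0 hlam1 hyps hypu Ps Pu hproj ρ hρinv hPsc hPuc X hXc ω hωc SX hSX Sω hSω
end

section
/- Let X be a bounded vector field on K. For x ∈ K define v(x) := S(X)(x) := Σ_{k≥0} Df^k(f^{-k}x) P^s(f^{-k}x) X(f^{-k}x) − Σ_{k≥1} Df^{-k}(f^{k}x) P^u(f^{k}x) X(f^{k}x). Then both series converge absolutely in E, sup_{x∈K} ‖v(x)‖ < ∞, and along every orbit x_n := f^n(x₀) in K the vectors v_n := v(x_n) satisfy the inhomogeneous tangent (shadowing) equation v_{n+1} = Df(x_n) v_n + X(x_{n+1}) for all n ∈ ℤ. -/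
/-!
Write `v = ∑ₖ aₖ - ∑ₖ bₖ` with `aₖ(x) = Df^k(f^{-k}x) P^s X(f^{-k}x)` and
`bₖ(x) = Df^{-(k+1)}(f^{k+1}x) P^u X(f^{k+1}x)`. Hyperbolicity bounds `aₖ` and `bₖ` by
`C λ^k sup ‖P‖ sup ‖X‖` uniformly on `K`, so both series converge absolutely and `v` is bounded.
By the chain rule the terms are shifted by `L = Df(x)`: `aₖ₊₁(f x) = L aₖ(x)` and
`bₖ(f x) = L bₖ₊₁(x)`. Hence `v(f x) = L v(x) + a₀(f x) + L b₀(x)`, and the two boundary terms are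
`P^s X(f x)` and `P^u X(f x)`, which add up to `X(f x)`.
-/

open Function Set

theorem Set.mapsTo_of_image_eq_self {α : Type*} {f g : α → α} (hgf : LeftInverse g f) {K : Set α}
    (hfK : f '' K = K) : MapsTo f K K ∧ MapsTo g K K := by
  have hgK : g '' K = K := by
    conv_lhs => rw [← hfK]
    exact hgf.image_image K
  exact ⟨(mapsTo_image f K).mono_right hfK.subset, (mapsTo_image g K).mono_right hgK.subset⟩

theorem Set.MapsTo.int_orbit_mem {α : Type*} {f g : α → α} (hgf : LeftInverse g f) {K : Set α}
    (hfK : MapsTo f K K) (hgK : MapsTo g K K) {orb : ℤ → α} (h0 : orb 0 ∈ K)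
    (hstep : ∀ n : ℤ, orb (n + 1) = f (orb n)) (n : ℤ) : orb n ∈ K := by
  induction n using Int.induction_on with
  | zero => exact h0
  | succ i ih => exact hstep i ▸ hfK ih
  | pred i ih =>
    have hprev : orb (-i - 1) = g (orb (-i)) := by
      rw [← hgf (orb (-i - 1)), ← hstep, sub_add_cancel]
    exact hprev ▸ hgK ih

section Derivatives

variable {𝕜 : Type*} [NontriviallyNormedField 𝕜] {E : Type*} [NormedAddCommGroup E]
  [NormedSpace 𝕜 E] {f g : E → E}

theorem fderiv_iterate_succ_apply (hf : Differentiable 𝕜 f) (k : ℕ) (x w : E) :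
    fderiv 𝕜 f^[k + 1] x w = fderiv 𝕜 f (f^[k] x) (fderiv 𝕜 f^[k] x w) := by
  rw [iterate_succ', fderiv_comp x (hf _) (hf.iterate k x)]
  rfl

theorem fderiv_apply_fderiv_of_inverse (hgf : LeftInverse g f) (hfg : RightInverse g f)
    (hf : Differentiable 𝕜 f) (hg : Differentiable 𝕜 g) (x w : E) :
    fderiv 𝕜 f x (fderiv 𝕜 g (f x) w) = w := by
  have hcomp := fderiv_comp (f x) (hgf x ▸ hf x) (hg (f x))
  rw [hfg.comp_eq_id, fderiv_id, hgf x] at hcomp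
  exact (congrArg (· w) hcomp).symm

end Derivatives

section NormBounds

variable {E : Type*} [NormedAddCommGroup E]

theorem summable_norm_of_le_geometric {a : ℕ → E} {c r : ℝ} (hr0 : 0 ≤ r) (hr1 : r < 1)
    (h : ∀ k, ‖a k‖ ≤ c * r ^ k) : Summable fun k => ‖a k‖ :=
  .of_nonneg_of_le (fun _ => norm_nonneg _) h ((summable_geometric_of_lt_one hr0 hr1).mul_left c)

theorem norm_tsum_le_of_le_geometric {a : ℕ → E} {c r : ℝ} (hr0 : 0 ≤ r) (hr1 : r < 1)
    (h : ∀ k, ‖a k‖ ≤ c * r ^ k) : ‖∑' k, a k‖ ≤ c * (1 - r)⁻¹ :=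
  tsum_of_norm_bounded ((hasSum_geometric_of_lt_one hr0 hr1).mul_left c) h

theorem norm_fderiv_iterate_apply_le [NormedSpace ℝ E] {f : E → E} {K : Set E} {V : E → Submodule ℝ E}
    {P : E → E →L[ℝ] E} {X : E → E} {C lam M : ℝ} (hC : 0 ≤ C) (hlam : 0 ≤ lam)
    (hcontr : ∀ (n : ℕ), ∀ x ∈ K, ∀ v ∈ V x, ‖fderiv ℝ (f^[n]) x v‖ ≤ C * lam ^ n * ‖v‖)
    (hPV : ∀ x ∈ K, ∀ v : E, P x v ∈ V x) (hPX : ∀ x ∈ K, ‖P x (X x)‖ ≤ M)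
    (n : ℕ) {y : E} (hy : y ∈ K) :
    ‖fderiv ℝ (f^[n]) y (P y (X y))‖ ≤ C * M * lam ^ n :=
  calc ‖fderiv ℝ (f^[n]) y (P y (X y))‖ ≤ C * lam ^ n * ‖P y (X y)‖ := hcontr n y hy _ (hPV y hy _)
    _ ≤ C * lam ^ n * M := by gcongr; exact hPX y hy
    _ = C * M * lam ^ n := by ring

end NormBounds

theorem ContinuousLinearMap.tsum_sub_tsum_of_shift {E F : Type*} [NormedAddCommGroup E]
    [NormedSpace ℝ E] [NormedAddCommGroup F] [NormedSpace ℝ F] (L : E →L[ℝ] F)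
    {a b : ℕ → E} {a' b' : ℕ → F} (ha : Summable a) (hb : Summable b)
    (ha' : ∀ k, a' (k + 1) = L (a k)) (hb' : ∀ k, b' k = L (b (k + 1))) :
    ∑' k, a' k - ∑' k, b' k = L (∑' k, a k - ∑' k, b k) + (a' 0 + L (b 0)) := by
  have hsum_a' : ∑' k, a' k = a' 0 + L (∑' k, a k) := by
    rw [tsum_eq_zero_add' (by simpa only [ha'] using ha.mapL L), L.map_tsum ha, tsum_congr ha']
  have hsum_b' : ∑' k, b' k = L (∑' k, b (k + 1)) := by
    rw [L.map_tsum ((summable_nat_add_iff 1).2 hb), tsum_congr hb']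
  rw [hsum_a', hsum_b', hb.tsum_eq_zero_add, map_sub, map_add]
  abel

noncomputable section ShadowingField

variable {E : Type*} [NormedAddCommGroup E] [NormedSpace ℝ E]
  (f g : E → E) (P Ps Pu : E → E →L[ℝ] E) (X : E → E)

def stableTerm (k : ℕ) (x : E) : E :=
  fderiv ℝ (f^[k]) (g^[k] x) (P (g^[k] x) (X (g^[k] x)))

def unstableTerm (k : ℕ) (x : E) : E :=
  fderiv ℝ (g^[k + 1]) (f^[k + 1] x) (P (f^[k + 1] x) (X (f^[k + 1] x)))

def shadowingField (x : E) : E :=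
  ∑' k, stableTerm f g Ps X k x - ∑' k, unstableTerm f g Pu X k x

theorem stableTerm_zero (x : E) : stableTerm f g P X 0 x = P x (X x) := by
  simp [stableTerm]

variable {f g} (hgf : LeftInverse g f) (hfg : RightInverse g f) (hf : Differentiable ℝ f)
include hgf hfg hf

theorem stableTerm_succ_apply (k : ℕ) (x : E) :
    stableTerm f g P X (k + 1) (f x) = fderiv ℝ f x (stableTerm f g P X k x) := by
  have hback : g^[k + 1] (f x) = g^[k] x := by rw [iterate_succ_apply, hgf x]
  rw [stableTerm, hback, fderiv_iterate_succ_apply hf, hfg.iterate k x]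
  rfl

variable (hg : Differentiable ℝ g)
include hg

theorem unstableTerm_apply (k : ℕ) (x : E) :
    unstableTerm f g P X k (f x) = fderiv ℝ f x (unstableTerm f g P X (k + 1) x) := by
  have hfwd : f^[k + 1] (f x) = f^[k + 2] x := (iterate_succ_apply f (k + 1) x).symm
  have hback : g^[k + 1] (f^[k + 2] x) = f x := by
    rw [← hfwd, hgf.iterate (k + 1) (f x)]
  rw [unstableTerm, unstableTerm, hfwd, fderiv_iterate_succ_apply hg (k + 1), hback,
    fderiv_apply_fderiv_of_inverse hgf hfg hf hg]

theorem fderiv_unstableTerm_zero (x : E) :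
    fderiv ℝ f x (unstableTerm f g P X 0 x) = P (f x) (X (f x)) := by
  simp only [unstableTerm, zero_add, iterate_one, fderiv_apply_fderiv_of_inverse hgf hfg hf hg]

theorem shadowingField_apply {x : E} (hs : Summable fun k => stableTerm f g Ps X k x)
    (hu : Summable fun k => unstableTerm f g Pu X k x)
    (hX : Ps (f x) (X (f x)) + Pu (f x) (X (f x)) = X (f x)) :
    shadowingField f g Ps Pu X (f x) = fderiv ℝ f x (shadowingField f g Ps Pu X x) + X (f x) := by
  rw [shadowingField, (fderiv ℝ f x).tsum_sub_tsum_of_shift hs hu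
    (stableTerm_succ_apply Ps X hgf hfg hf · x) (unstableTerm_apply Pu X hgf hfg hf hg · x),
    stableTerm_zero, fderiv_unstableTerm_zero Pu X hgf hfg hf hg, hX]
  rfl

end ShadowingField

theorem shadowing_expansion_discrete_general
    {E : Type*} [NormedAddCommGroup E] [NormedSpace ℝ E] [FiniteDimensional ℝ E]
    (f g : E → E) (hgf : Function.LeftInverse g f) (hfg : Function.RightInverse g f)
    (hf : ContDiff ℝ 1 f) (hg : ContDiff ℝ 1 g)
    (K : Set E) (hfK : f '' K = K)
    (Vs Vu : E → Submodule ℝ E)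
    (C lam : ℝ) (hC : 0 < C) (hlam0 : 0 < lam) (hlam1 : lam < 1)
    (hyps : ∀ (n : ℕ), ∀ x ∈ K, ∀ v ∈ Vs x, ‖fderiv ℝ (f^[n]) x v‖ ≤ C * lam ^ n * ‖v‖)
    (hypu : ∀ (n : ℕ), ∀ x ∈ K, ∀ v ∈ Vu x, ‖fderiv ℝ (g^[n]) x v‖ ≤ C * lam ^ n * ‖v‖)
    (Ps Pu : E → E →L[ℝ] E)
    (hproj : ∀ x ∈ K, ∀ v : E, Ps x v ∈ Vs x ∧ Pu x v ∈ Vu x ∧ Ps x v + Pu x v = v)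
    (hPbdd : ∃ M : ℝ, ∀ x ∈ K, ‖Ps x‖ + ‖Pu x‖ ≤ M)
    (X : E → E) (hXb : ∃ M : ℝ, ∀ x ∈ K, ‖X x‖ ≤ M)
    (v : E → E)
    (hv : ∀ x : E, v x =
      (∑' k : ℕ, fderiv ℝ (f^[k]) (g^[k] x) (Ps (g^[k] x) (X (g^[k] x)))) -
      ∑' k : ℕ, fderiv ℝ (g^[k+1]) (f^[k+1] x) (Pu (f^[k+1] x) (X (f^[k+1] x)))) :
    (∀ x ∈ K,
      Summable (fun k : ℕ => ‖fderiv ℝ (f^[k]) (g^[k] x) (Ps (g^[k] x) (X (g^[k] x)))‖) ∧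
      Summable (fun k : ℕ =>
        ‖fderiv ℝ (g^[k+1]) (f^[k+1] x) (Pu (f^[k+1] x) (X (f^[k+1] x)))‖)) ∧
    (∃ M : ℝ, ∀ x ∈ K, ‖v x‖ ≤ M) ∧
    (∀ orb : ℤ → E, orb 0 ∈ K → (∀ n : ℤ, orb (n + 1) = f (orb n)) →
      ∀ n : ℤ, v (orb (n + 1)) = fderiv ℝ f (orb n) (v (orb n)) + X (orb (n + 1))) := by
  obtain ⟨MP, hMP⟩ := hPbdd
  obtain ⟨MX, hMX⟩ := hXb
  obtain rfl : v = shadowingField f g Ps Pu X := funext hv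
  obtain ⟨hfK, hgK⟩ := mapsTo_of_image_eq_self hgf hfK
  have hPsX (x) (hx : x ∈ K) : ‖Ps x (X x)‖ ≤ MP * MX :=
    (Ps x).le_of_opNorm_le_of_le (by linarith [hMP x hx, norm_nonneg (Pu x)]) (hMX x hx)
  have hPuX (x) (hx : x ∈ K) : ‖Pu x (X x)‖ ≤ MP * MX :=
    (Pu x).le_of_opNorm_le_of_le (by linarith [hMP x hx, norm_nonneg (Ps x)]) (hMX x hx)
  have hs {x} (hx : x ∈ K) (k : ℕ) : ‖stableTerm f g Ps X k x‖ ≤ C * (MP * MX) * lam ^ k :=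
    norm_fderiv_iterate_apply_le hC.le hlam0.le hyps (fun y hy w => (hproj y hy w).1) hPsX k
      (hgK.iterate k hx)
  have hu {x} (hx : x ∈ K) (k : ℕ) :
      ‖unstableTerm f g Pu X k x‖ ≤ C * (MP * MX) * lam * lam ^ k :=
    (norm_fderiv_iterate_apply_le hC.le hlam0.le hypu (fun y hy w => (hproj y hy w).2.1) hPuX
      (k + 1) (hfK.iterate (k + 1) hx)).trans_eq (by ring)
  have hsum_s {x} (hx : x ∈ K) := summable_norm_of_le_geometric hlam0.le hlam1 (hs hx)
  have hsum_u {x} (hx : x ∈ K) := summable_norm_of_le_geometric hlam0.le hlam1 (hu hx)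
  refine ⟨fun x hx => ⟨hsum_s hx, hsum_u hx⟩,
    ⟨C * (MP * MX) * (1 - lam)⁻¹ + C * (MP * MX) * lam * (1 - lam)⁻¹, fun x hx => ?_⟩,
    fun orb h0 hstep n => ?_⟩
  · exact (norm_sub_le _ _).trans (add_le_add
      (norm_tsum_le_of_le_geometric hlam0.le hlam1 (hs hx))
      (norm_tsum_le_of_le_geometric hlam0.le hlam1 (hu hx)))
  · have horb := hfK.int_orbit_mem hgf hgK h0 hstep n
    rw [hstep n]
    exact shadowingField_apply Ps Pu X hgf hfg (hf.differentiable one_ne_zero)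
      (hg.differentiable one_ne_zero) (hsum_s horb).of_norm (hsum_u horb).of_norm
      (hproj _ (hfK horb) _).2.2

theorem shadowing_expansion_discrete
    {E : Type*} [NormedAddCommGroup E] [NormedSpace ℝ E] [FiniteDimensional ℝ E]
    (f g : E → E) (hgf : Function.LeftInverse g f) (hfg : Function.RightInverse g f)
    (hf : ContDiff ℝ 1 f) (hg : ContDiff ℝ 1 g)
    (K : Set E) (hKc : IsCompact K) (hfK : f '' K = K)
    (Vs Vu : E → Submodule ℝ E)
    (hsplit : ∀ x ∈ K, IsCompl (Vs x) (Vu x))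
    (hequivs : ∀ x ∈ K, (Vs x).map (fderiv ℝ f x : E →ₗ[ℝ] E) = Vs (f x))
    (hequivu : ∀ x ∈ K, (Vu x).map (fderiv ℝ f x : E →ₗ[ℝ] E) = Vu (f x))
    (C lam : ℝ) (hC : 0 < C) (hlam0 : 0 < lam) (hlam1 : lam < 1)
    (hyps : ∀ (n : ℕ), ∀ x ∈ K, ∀ v ∈ Vs x, ‖fderiv ℝ (f^[n]) x v‖ ≤ C * lam ^ n * ‖v‖)
    (hypu : ∀ (n : ℕ), ∀ x ∈ K, ∀ v ∈ Vu x, ‖fderiv ℝ (g^[n]) x v‖ ≤ C * lam ^ n * ‖v‖)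
    (Ps Pu : E → E →L[ℝ] E)
    (hproj : ∀ x ∈ K, ∀ v : E, Ps x v ∈ Vs x ∧ Pu x v ∈ Vu x ∧ Ps x v + Pu x v = v)
    (hPbdd : ∃ M : ℝ, ∀ x ∈ K, ‖Ps x‖ + ‖Pu x‖ ≤ M)
    (X : E → E) (hXb : ∃ M : ℝ, ∀ x ∈ K, ‖X x‖ ≤ M)
    (v : E → E)
    (hv : ∀ x : E, v x =
      (∑' k : ℕ, fderiv ℝ (f^[k]) (g^[k] x) (Ps (g^[k] x) (X (g^[k] x)))) -
      ∑' k : ℕ, fderiv ℝ (g^[k+1]) (f^[k+1] x) (Pu (f^[k+1] x) (X (f^[k+1] x)))) :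
    (∀ x ∈ K,
      Summable (fun k : ℕ => ‖fderiv ℝ (f^[k]) (g^[k] x) (Ps (g^[k] x) (X (g^[k] x)))‖) ∧
      Summable (fun k : ℕ =>
        ‖fderiv ℝ (g^[k+1]) (f^[k+1] x) (Pu (f^[k+1] x) (X (f^[k+1] x)))‖)) ∧
    (∃ M : ℝ, ∀ x ∈ K, ‖v x‖ ≤ M) ∧
    (∀ orb : ℤ → E, orb 0 ∈ K → (∀ n : ℤ, orb (n + 1) = f (orb n)) →
      ∀ n : ℤ, v (orb (n + 1)) = fderiv ℝ f (orb n) (v (orb n)) + X (orb (n + 1))) :=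
  shadowing_expansion_discrete_general f g hgf hfg hf hg K hfK Vs Vu C lam hC hlam0 hlam1 hyps hypu
    Ps Pu hproj hPbdd X hXb v hv
end

section
/- Let x_t := φ^t(x₀) be an orbit in K. Suppose v : ℝ → E is differentiable and bounded, η : ℝ → ℝ is continuous and bounded, and dv_t/dt = DF(x_t) v_t − η_t F(x_t) for all t ∈ ℝ. Then v_t lies in V^c(x_t) = span(F(x_t)) for every t; writing v_t = −h_t F(x_t), the function h : ℝ → ℝ is bounded, differentiable, and dh_t/dt = η_t for all t. -/
/-!
Differentiating `φ t y = y + ∫₀ᵗ F (φ s y)` in `y` under the integral sign shows that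
`t ↦ Dφ^t(x₀)` solves the variational equation `Ẏ = DF(x_t) Y`, and so does `t ↦ F(x_t)`.
Variation of constants and uniqueness for linear ODEs then give
`v_t = Dφ^t(x₀) v₀ - (∫₀ᵗ η) F(x_t)`. The second term lies in the center direction, so the
stable and unstable components of `v_t` are the images under `Dφ^t(x₀)` of those of `v₀`.
They stay bounded for all `t ∈ ℝ`, which hyperbolicity allows only if they vanish; hence
`v₀ = a F(x₀)` and `v_t = (a - ∫₀ᵗ η) F(x_t)`. The coefficient is bounded because `‖F‖` is
bounded below on `K`.
-/

open Set Filter Topology Metric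

theorem proj_eq_of_add_add_eq {R M : Type*} [Ring R] [AddCommGroup M] [Module R M]
    {Vs Vu Vc : Submodule R M} {Ps Pu Pc : M → M}
    (hproj : ∀ v, Ps v ∈ Vs ∧ Pu v ∈ Vu ∧ Pc v ∈ Vc ∧ Ps v + Pu v + Pc v = v)
    (hdirect : ∀ vs ∈ Vs, ∀ vu ∈ Vu, ∀ vc ∈ Vc, vs + vu + vc = 0 → vs = 0 ∧ vu = 0 ∧ vc = 0)
    {z ws wu wc : M} (hws : ws ∈ Vs) (hwu : wu ∈ Vu) (hwc : wc ∈ Vc) (hz : ws + wu + wc = z) :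
    Ps z = ws ∧ Pu z = wu ∧ Pc z = wc := by
  obtain ⟨hs, hu, hc, hsum⟩ := hproj z
  have h : (Ps z - ws) + (Pu z - wu) + (Pc z - wc) = 0 := by
    rw [← sub_eq_zero.2 (hsum.trans hz.symm)]
    abel
  obtain ⟨h₁, h₂, h₃⟩ := hdirect _ (sub_mem hs hws) _ (sub_mem hu hwu) _ (sub_mem hc hwc) h
  exact ⟨sub_eq_zero.1 h₁, sub_eq_zero.1 h₂, sub_eq_zero.1 h₃⟩

theorem eq_zero_of_forall_norm_le_mul_rpow {E : Type*} [NormedAddCommGroup E] {z : E}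
    {C lam M : ℝ} (hlam0 : 0 ≤ lam) (hlam1 : lam < 1)
    (h : ∀ t : ℝ, 0 ≤ t → ‖z‖ ≤ C * lam ^ t * M) : z = 0 := by
  have hlim : Tendsto (fun t : ℝ => C * lam ^ t * M) atTop (𝓝 0) := by
    simpa using
      ((tendsto_rpow_atTop_of_base_lt_one lam (by linarith) hlam1).const_mul C).mul_const M
  exact norm_le_zero_iff.1 (ge_of_tendsto hlim (eventually_atTop.2 ⟨0, h⟩))

section

variable {E : Type*} [NormedAddCommGroup E] [NormedSpace ℝ E]

theorem eq_of_hasDerivAt_clm_apply {A : ℝ → E →L[ℝ] E} (hA : Continuous A) {u w : ℝ → E}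
    (hu : ∀ t, HasDerivAt u (A t (u t)) t) (hw : ∀ t, HasDerivAt w (A t (w t)) t)
    (h0 : u 0 = w 0) : u = w := by
  funext t
  obtain ⟨L, hL⟩ := (isCompact_Icc (a := -|t| - 1) (b := |t| + 1)).exists_bound_of_continuousOn
    hA.continuousOn
  have hlip : ∀ s ∈ Ioo (-|t| - 1) (|t| + 1), LipschitzOnWith L.toNNReal (A s) univ :=
    fun s hs => ((A s).lipschitz.weaken <| by
      rw [← NNReal.coe_le_coe, coe_nnnorm]
      exact (hL s (Ioo_subset_Icc_self hs)).trans (Real.le_coe_toNNReal L)).lipschitzOnWith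
  exact ODE_solution_unique_of_mem_Ioo hlip
    ⟨by linarith [abs_nonneg t], by linarith [abs_nonneg t]⟩
    (fun s _ => ⟨hu s, mem_univ _⟩) (fun s _ => ⟨hw s, mem_univ _⟩) h0
    ⟨by linarith [neg_abs_le t], by linarith [le_abs_self t]⟩

variable {F : E → E} {φ : ℝ → E → E}

theorem continuous_uncurry_of_continuous_fderiv (hdiff : ∀ t, Differentiable ℝ (φ t))
    (hD : Continuous fun p : ℝ × E => fderiv ℝ (φ p.1) p.2)
    (hcurve : ∀ x, Continuous fun t => φ t x) :
    Continuous fun p : ℝ × E => φ p.1 p.2 := by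
  refine continuous_iff_continuousAt.2 fun p => ?_
  obtain ⟨δ, hδ, hR⟩ := eventually_nhds_iff_ball.1 <|
    hD.nnnorm.continuousAt.eventually (gt_mem_nhds (lt_add_one ‖fderiv ℝ (φ p.1) p.2‖₊))
  rw [← ball_prod_same] at hR
  have hlip : ∀ t ∈ ball p.1 δ,
      LipschitzOnWith (‖fderiv ℝ (φ p.1) p.2‖₊ + 1) (φ t) (ball p.2 δ) :=
    fun t ht => (convex_ball _ _).lipschitzOnWith_of_nnnorm_fderiv_le (fun x _ => hdiff t x)
      fun x hx => (hR (t, x) ⟨ht, hx⟩).le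
  exact (continuousOn_prod_of_continuousOn_lipschitzOnWith' (fun q : ℝ × E => φ q.1 q.2) _ hlip
    fun x _ => (hcurve x).continuousOn).continuousAt
    (prod_mem_nhds (ball_mem_nhds _ hδ) (ball_mem_nhds _ hδ))

theorem fderiv_flow_apply_self (hφ0 : ∀ x, φ 0 x = x)
    (hφadd : ∀ s t x, φ (s + t) x = φ s (φ t x))
    (hφode : ∀ x t, HasDerivAt (fun s => φ s x) (F (φ t x)) t)
    (hdiff : ∀ t, Differentiable ℝ (φ t)) (t : ℝ) (x : E) :
    fderiv ℝ (φ t) x (F x) = F (φ t x) := by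
  have h₁ : HasDerivAt (fun s => φ t (φ s x)) (fderiv ℝ (φ t) x (F x)) 0 := by
    simpa [hφ0, Function.comp_def] using
      (hdiff t (φ 0 x)).hasFDerivAt.comp_hasDerivAt 0 (hφode x 0)
  have h₂ : HasDerivAt (fun s => φ t (φ s x)) (F (φ t x)) 0 := by
    simpa [hφadd] using (hφode x (t + 0)).comp_const_add t 0
  exact h₁.unique h₂

theorem fderiv_flow_apply_fderiv_flow (hφ0 : ∀ x, φ 0 x = x)
    (hφadd : ∀ s t x, φ (s + t) x = φ s (φ t x))
    (hdiff : ∀ t, Differentiable ℝ (φ t)) {s t : ℝ} (hst : s + t = 0) (x w : E) :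
    fderiv ℝ (φ s) (φ t x) (fderiv ℝ (φ t) x w) = w := by
  have hcomp : φ s ∘ φ t = id := funext fun y => by simp [← hφadd, hst, hφ0]
  rw [← ContinuousLinearMap.comp_apply, ← fderiv_comp x (hdiff s _) (hdiff t x), hcomp, fderiv_id,
    ContinuousLinearMap.id_apply]

theorem continuous_fderiv_comp_fderiv_flow (hF : ContDiff ℝ 1 F)
    (hφode : ∀ x t, HasDerivAt (fun s => φ s x) (F (φ t x)) t)
    (hdiff : ∀ t, Differentiable ℝ (φ t))
    (hD : Continuous fun p : ℝ × E => fderiv ℝ (φ p.1) p.2) :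
    Continuous fun p : ℝ × E => (fderiv ℝ F (φ p.1 p.2)).comp (fderiv ℝ (φ p.1) p.2) :=
  ((hF.continuous_fderiv one_ne_zero).comp <| continuous_uncurry_of_continuous_fderiv hdiff hD
    fun x => continuous_iff_continuousAt.2 fun t => (hφode x t).continuousAt).clm_comp hD

theorem fderiv_flow_eq_id_add_integral [FiniteDimensional ℝ E] (hF : ContDiff ℝ 1 F)
    (hφ0 : ∀ x, φ 0 x = x) (hφode : ∀ x t, HasDerivAt (fun s => φ s x) (F (φ t x)) t)
    (hdiff : ∀ t, Differentiable ℝ (φ t))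
    (hD : Continuous fun p : ℝ × E => fderiv ℝ (φ p.1) p.2) (x : E) (t : ℝ) :
    fderiv ℝ (φ t) x = ContinuousLinearMap.id ℝ E +
      ∫ s in (0 : ℝ)..t, (fderiv ℝ F (φ s x)).comp (fderiv ℝ (φ s) x) := by
  have hFd : Differentiable ℝ F := hF.differentiable one_ne_zero
  have hFφ : ∀ y, Continuous fun s => F (φ s y) := fun y =>
    hFd.continuous.comp (continuous_iff_continuousAt.2 fun s => (hφode y s).continuousAt)
  have hG := continuous_fderiv_comp_fderiv_flow hF hφode hdiff hD
  obtain ⟨R, hR⟩ := ((isCompact_uIcc (a := 0) (b := t)).prod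
    (isCompact_closedBall x 1)).exists_bound_of_continuousOn hG.continuousOn
  have hflow : ∀ y, φ t y = y + ∫ s in (0 : ℝ)..t, F (φ s y) := fun y => by
    rw [intervalIntegral.integral_eq_sub_of_hasDerivAt (fun s _ => hφode y s)
      ((hFφ y).intervalIntegrable _ _), hφ0, add_sub_cancel]
  have hint : HasFDerivAt (fun y => ∫ s in (0 : ℝ)..t, F (φ s y))
      (∫ s in (0 : ℝ)..t, (fderiv ℝ F (φ s x)).comp (fderiv ℝ (φ s) x)) x :=
    intervalIntegral.hasFDerivAt_integral_of_dominated_of_fderiv_le (bound := fun _ => R)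
      (ball_mem_nhds x one_pos) (.of_forall fun y => (hFφ y).aestronglyMeasurable)
      ((hFφ x).intervalIntegrable _ _)
      (hG.comp (continuous_id.prodMk continuous_const)).aestronglyMeasurable
      (.of_forall fun s hs y hy => hR (s, y) ⟨uIoc_subset_uIcc hs, ball_subset_closedBall hy⟩)
      intervalIntegrable_const
      (.of_forall fun s _ y _ => (hFd (φ s y)).hasFDerivAt.comp y (hdiff s y).hasFDerivAt)
  exact (((hasFDerivAt_id x).add hint).congr_of_eventuallyEq (.of_forall hflow)).fderiv

theorem hasDerivAt_fderiv_flow [FiniteDimensional ℝ E] (hF : ContDiff ℝ 1 F)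
    (hφ0 : ∀ x, φ 0 x = x) (hφode : ∀ x t, HasDerivAt (fun s => φ s x) (F (φ t x)) t)
    (hdiff : ∀ t, Differentiable ℝ (φ t))
    (hD : Continuous fun p : ℝ × E => fderiv ℝ (φ p.1) p.2) (x : E) (t : ℝ) :
    HasDerivAt (fun s => fderiv ℝ (φ s) x) ((fderiv ℝ F (φ t x)).comp (fderiv ℝ (φ t) x)) t := by
  have hG := (continuous_fderiv_comp_fderiv_flow hF hφode hdiff hD).comp
    (continuous_id.prodMk (continuous_const (y := x)))
  rw [funext fun s => fderiv_flow_eq_id_add_integral hF hφ0 hφode hdiff hD x s]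
  exact (hG.integral_hasStrictDerivAt 0 t).hasDerivAt.const_add _

theorem eq_fderiv_flow_apply_sub_integral_smul [FiniteDimensional ℝ E] (hF : ContDiff ℝ 1 F)
    (hφ0 : ∀ x, φ 0 x = x) (hφode : ∀ x t, HasDerivAt (fun s => φ s x) (F (φ t x)) t)
    (hdiff : ∀ t, Differentiable ℝ (φ t))
    (hD : Continuous fun p : ℝ × E => fderiv ℝ (φ p.1) p.2) {x : E} {η : ℝ → ℝ}
    (hη : Continuous η) {v : ℝ → E}
    (hv : ∀ t, HasDerivAt v (fderiv ℝ F (φ t x) (v t) - η t • F (φ t x)) t) (t : ℝ) :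
    v t = fderiv ℝ (φ t) x (v 0) - (∫ s in (0 : ℝ)..t, η s) • F (φ t x) := by
  set I : ℝ → ℝ := fun t => ∫ s in (0 : ℝ)..t, η s
  have hI : ∀ t, HasDerivAt I (η t) t := fun t => (hη.integral_hasStrictDerivAt 0 t).hasDerivAt
  have hFφ : ∀ t, HasDerivAt (fun s => F (φ s x)) (fderiv ℝ F (φ t x) (F (φ t x))) t := fun t =>
    (hF.differentiable one_ne_zero _).hasFDerivAt.comp_hasDerivAt t (hφode x t)
  have hA : Continuous fun t => fderiv ℝ F (φ t x) := (hF.continuous_fderiv one_ne_zero).comp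
    (continuous_iff_continuousAt.2 fun t => (hφode x t).continuousAt)
  have hu : ∀ t, HasDerivAt (fun s => v s + I s • F (φ s x))
      (fderiv ℝ F (φ t x) (v t + I t • F (φ t x))) t := fun t =>
    ((hv t).add ((hI t).smul (hFφ t))).congr_deriv <| by
      simp only [map_add, map_smul]
      abel
  have hw : ∀ t, HasDerivAt (fun s => fderiv ℝ (φ s) x (v 0))
      (fderiv ℝ F (φ t x) (fderiv ℝ (φ t) x (v 0))) t := fun t => by
    simpa using (hasDerivAt_fderiv_flow hF hφ0 hφode hdiff hD x t).clm_apply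
      (hasDerivAt_const t (v 0))
  have hφ0' : φ 0 = id := funext hφ0
  exact eq_sub_of_add_eq <|
    congrFun (eq_of_hasDerivAt_clm_apply hA hu hw (by simp [I, hφ0'])) t

variable {K : Set E} {Vs Vu Vc : E → Submodule ℝ E} {Ps Pu Pc : E → E →L[ℝ] E}

theorem proj_apply_eq_apply_proj
    (hproj : ∀ x ∈ K, ∀ v : E, Ps x v ∈ Vs x ∧ Pu x v ∈ Vu x ∧ Pc x v ∈ Vc x ∧
      Ps x v + Pu x v + Pc x v = v)
    (hdirect : ∀ x ∈ K, ∀ vs ∈ Vs x, ∀ vu ∈ Vu x, ∀ vc ∈ Vc x,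
      vs + vu + vc = 0 → vs = 0 ∧ vu = 0 ∧ vc = 0)
    {x y : E} (hx : x ∈ K) (hy : y ∈ K) (T : E →L[ℝ] E)
    (hTs : (Vs x).map (T : E →ₗ[ℝ] E) = Vs y)
    (hTu : (Vu x).map (T : E →ₗ[ℝ] E) = Vu y) (hTc : (Vc x).map (T : E →ₗ[ℝ] E) = Vc y)
    {z w : E} (hzw : T z - w ∈ Vc y) :
    Ps y w = T (Ps x z) ∧ Pu y w = T (Pu x z) := by
  obtain ⟨hs, hu, hc, hsum⟩ := hproj x hx z
  have h := proj_eq_of_add_add_eq (hproj y hy) (hdirect y hy) (z := w)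
    (hTs ▸ Submodule.mem_map_of_mem hs) (hTu ▸ Submodule.mem_map_of_mem hu)
    (sub_mem (hTc ▸ Submodule.mem_map_of_mem hc) hzw)
    (by simp only [ContinuousLinearMap.coe_coe]; rw [← congrArg T hsum, map_add, map_add]; abel)
  exact ⟨h.1, h.2.1⟩

theorem mem_center_of_forall_norm_le {C lam : ℝ} (hφ0 : ∀ x, φ 0 x = x)
    (hφadd : ∀ s t x, φ (s + t) x = φ s (φ t x)) (hdiff : ∀ t, Differentiable ℝ (φ t))
    (hC : 0 ≤ C) (hlam0 : 0 ≤ lam) (hlam1 : lam < 1)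
    (hyps : ∀ t : ℝ, 0 ≤ t → ∀ x ∈ K, ∀ v ∈ Vs x,
      ‖fderiv ℝ (φ t) x v‖ ≤ C * lam ^ t * ‖v‖)
    (hypu : ∀ t : ℝ, 0 ≤ t → ∀ x ∈ K, ∀ v ∈ Vu x,
      ‖fderiv ℝ (φ (-t)) x v‖ ≤ C * lam ^ t * ‖v‖)
    (hproj : ∀ x ∈ K, ∀ v : E, Ps x v ∈ Vs x ∧ Pu x v ∈ Vu x ∧ Pc x v ∈ Vc x ∧
      Ps x v + Pu x v + Pc x v = v)
    (hdirect : ∀ x ∈ K, ∀ vs ∈ Vs x, ∀ vu ∈ Vu x, ∀ vc ∈ Vc x,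
      vs + vu + vc = 0 → vs = 0 ∧ vu = 0 ∧ vc = 0)
    (hPbdd : ∃ M : ℝ, ∀ x ∈ K, ‖Ps x‖ + ‖Pu x‖ + ‖Pc x‖ ≤ M)
    {x : E} (hx : x ∈ K) (horb : ∀ t, φ t x ∈ K)
    (hequivs : ∀ t, (Vs x).map (fderiv ℝ (φ t) x : E →ₗ[ℝ] E) = Vs (φ t x))
    (hequivu : ∀ t, (Vu x).map (fderiv ℝ (φ t) x : E →ₗ[ℝ] E) = Vu (φ t x))
    (hequivc : ∀ t, (Vc x).map (fderiv ℝ (φ t) x : E →ₗ[ℝ] E) = Vc (φ t x))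
    {z : E} {w : ℝ → E} {M : ℝ} (hw : ∀ t, ‖w t‖ ≤ M)
    (hzw : ∀ t, fderiv ℝ (φ t) x z - w t ∈ Vc (φ t x)) :
    z ∈ Vc x := by
  obtain ⟨Mp, hMp⟩ := hPbdd
  obtain ⟨hzs, hzu, hzc, hsum⟩ := hproj x hx z
  have hM : 0 ≤ M := (norm_nonneg _).trans (hw 0)
  have hbound : ∀ t, ‖fderiv ℝ (φ t) x (Ps x z)‖ ≤ Mp * M ∧
      ‖fderiv ℝ (φ t) x (Pu x z)‖ ≤ Mp * M := fun t => by
    obtain ⟨hs, hu⟩ := proj_apply_eq_apply_proj hproj hdirect hx (horb t) _ (hequivs t)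
      (hequivu t) (hequivc t) (hzw t)
    have hPs : ‖Ps (φ t x)‖ ≤ Mp := by
      linarith [hMp _ (horb t), norm_nonneg (Pu (φ t x)), norm_nonneg (Pc (φ t x))]
    have hPu : ‖Pu (φ t x)‖ ≤ Mp := by
      linarith [hMp _ (horb t), norm_nonneg (Ps (φ t x)), norm_nonneg (Pc (φ t x))]
    rw [← hs, ← hu]
    exact ⟨((Ps _).le_opNorm_of_le (hw t)).trans (mul_le_mul_of_nonneg_right hPs hM),
      ((Pu _).le_opNorm_of_le (hw t)).trans (mul_le_mul_of_nonneg_right hPu hM)⟩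
  have hs0 : Ps x z = 0 := eq_zero_of_forall_norm_le_mul_rpow hlam0 hlam1 fun t ht => calc
    ‖Ps x z‖ = ‖fderiv ℝ (φ t) (φ (-t) x) (fderiv ℝ (φ (-t)) x (Ps x z))‖ := by
      rw [fderiv_flow_apply_fderiv_flow hφ0 hφadd hdiff (add_neg_cancel t)]
    _ ≤ C * lam ^ t * ‖fderiv ℝ (φ (-t)) x (Ps x z)‖ :=
      hyps t ht _ (horb (-t)) _ (hequivs (-t) ▸ Submodule.mem_map_of_mem hzs)
    _ ≤ C * lam ^ t * (Mp * M) := by gcongr; exact (hbound (-t)).1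
  have hu0 : Pu x z = 0 := eq_zero_of_forall_norm_le_mul_rpow hlam0 hlam1 fun t ht => calc
    ‖Pu x z‖ = ‖fderiv ℝ (φ (-t)) (φ t x) (fderiv ℝ (φ t) x (Pu x z))‖ := by
      rw [fderiv_flow_apply_fderiv_flow hφ0 hφadd hdiff (neg_add_cancel t)]
    _ ≤ C * lam ^ t * ‖fderiv ℝ (φ t) x (Pu x z)‖ :=
      hypu t ht _ (horb t) _ (hequivu t ▸ Submodule.mem_map_of_mem hzu)
    _ ≤ C * lam ^ t * (Mp * M) := by gcongr; exact (hbound t).2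
  rw [hs0, hu0, zero_add, zero_add] at hsum
  exact hsum ▸ hzc

end

theorem center_tangent_solution_flow_general
    {E : Type*} [NormedAddCommGroup E] [NormedSpace ℝ E] [FiniteDimensional ℝ E]
    (F : E → E) (hF : ContDiff ℝ 2 F)
    (φ : ℝ → E → E)
    (hφ0 : ∀ x : E, φ 0 x = x)
    (hφadd : ∀ (s t : ℝ) (x : E), φ (s + t) x = φ s (φ t x))
    (hφode : ∀ (x : E) (t : ℝ), HasDerivAt (fun s => φ s x) (F (φ t x)) t)
    (hφC1 : ∀ t : ℝ, ContDiff ℝ 1 (φ t))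
    (hφD : Continuous fun p : ℝ × E => fderiv ℝ (φ p.1) p.2)
    (K : Set E) (hKc : IsCompact K) (hφK : ∀ t : ℝ, φ t '' K = K)
    (hFne : ∀ x ∈ K, F x ≠ 0)
    (Vs Vu Vc : E → Submodule ℝ E)
    (hVc : ∀ x ∈ K, Vc x = Submodule.span ℝ {F x})
    (hequivs : ∀ (t : ℝ), ∀ x ∈ K, (Vs x).map (fderiv ℝ (φ t) x : E →ₗ[ℝ] E) = Vs (φ t x))
    (hequivu : ∀ (t : ℝ), ∀ x ∈ K, (Vu x).map (fderiv ℝ (φ t) x : E →ₗ[ℝ] E) = Vu (φ t x))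
    (hequivc : ∀ (t : ℝ), ∀ x ∈ K, (Vc x).map (fderiv ℝ (φ t) x : E →ₗ[ℝ] E) = Vc (φ t x))
    (C lam : ℝ) (hC : 0 < C) (hlam0 : 0 < lam) (hlam1 : lam < 1)
    (hyps : ∀ t : ℝ, 0 ≤ t → ∀ x ∈ K, ∀ v ∈ Vs x, ‖fderiv ℝ (φ t) x v‖ ≤ C * lam ^ t * ‖v‖)
    (hypu : ∀ t : ℝ, 0 ≤ t → ∀ x ∈ K, ∀ v ∈ Vu x, ‖fderiv ℝ (φ (-t)) x v‖ ≤ C * lam ^ t * ‖v‖)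
    (Ps Pu Pc : E → E →L[ℝ] E)
    (hproj : ∀ x ∈ K, ∀ v : E, Ps x v ∈ Vs x ∧ Pu x v ∈ Vu x ∧ Pc x v ∈ Vc x ∧
      Ps x v + Pu x v + Pc x v = v)
    (hdirect : ∀ x ∈ K, ∀ vs ∈ Vs x, ∀ vu ∈ Vu x, ∀ vc ∈ Vc x,
      vs + vu + vc = 0 → vs = 0 ∧ vu = 0 ∧ vc = 0)
    (hPbdd : ∃ M : ℝ, ∀ x ∈ K, ‖Ps x‖ + ‖Pu x‖ + ‖Pc x‖ ≤ M)
    (x₀ : E) (hx₀ : x₀ ∈ K)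
    (v : ℝ → E) (hvb : ∃ M : ℝ, ∀ t : ℝ, ‖v t‖ ≤ M)
    (η : ℝ → ℝ) (hηc : Continuous η)
    (hode : ∀ t : ℝ,
      HasDerivAt v (fderiv ℝ F (φ t x₀) (v t) - η t • F (φ t x₀)) t) :
    (∀ t : ℝ, v t ∈ Vc (φ t x₀)) ∧
    ∃ h : ℝ → ℝ, (∀ t : ℝ, v t = -h t • F (φ t x₀)) ∧
      (∃ M : ℝ, ∀ t : ℝ, |h t| ≤ M) ∧ (∀ t : ℝ, HasDerivAt h (η t) t) := by
  obtain ⟨Mv, hMv⟩ := hvb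
  have hF1 : ContDiff ℝ 1 F := hF.of_le one_le_two
  have hdiff : ∀ t, Differentiable ℝ (φ t) := fun t => (hφC1 t).differentiable one_ne_zero
  have horb : ∀ t, φ t x₀ ∈ K := fun t => hφK t ▸ mem_image_of_mem _ hx₀
  set I : ℝ → ℝ := fun t => ∫ s in (0 : ℝ)..t, η s
  have hv := eq_fderiv_flow_apply_sub_integral_smul hF1 hφ0 hφode hdiff hφD hηc hode
  have hv0 : v 0 ∈ Vc x₀ := mem_center_of_forall_norm_le hφ0 hφadd hdiff hC.le hlam0.le hlam1
    hyps hypu hproj hdirect hPbdd hx₀ horb (fun t => hequivs t x₀ hx₀) (fun t => hequivu t x₀ hx₀)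
    (fun t => hequivc t x₀ hx₀) hMv fun t => by
      rw [hv t, sub_sub_cancel, hVc _ (horb t)]
      exact Submodule.smul_mem _ _ (Submodule.mem_span_singleton_self _)
  obtain ⟨a, ha⟩ := Submodule.mem_span_singleton.1 (hVc x₀ hx₀ ▸ hv0)
  have hvt : ∀ t, v t = -(I t - a) • F (φ t x₀) := fun t => by
    rw [hv t, ← ha, map_smul, fderiv_flow_apply_self hφ0 hφadd hφode hdiff, neg_sub, sub_smul]
  obtain ⟨y, hyK, hy⟩ := hKc.exists_isMinOn ⟨x₀, hx₀⟩ hF1.continuous.norm.continuousOn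
  have hm : 0 < ‖F y‖ := norm_pos_iff.2 (hFne y hyK)
  refine ⟨fun t => ?_, fun t => I t - a, hvt, ⟨Mv / ‖F y‖, fun t => ?_⟩,
    fun t => (hηc.integral_hasStrictDerivAt 0 t).hasDerivAt.sub_const a⟩
  · rw [hvt t, hVc _ (horb t)]
    exact Submodule.smul_mem _ _ (Submodule.mem_span_singleton_self _)
  · rw [le_div_iff₀ hm]
    calc |I t - a| * ‖F y‖ ≤ |I t - a| * ‖F (φ t x₀)‖ := by gcongr; exact hy (horb t)
      _ = ‖v t‖ := by rw [hvt t, norm_smul, norm_neg, Real.norm_eq_abs]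
      _ ≤ Mv := hMv t

theorem center_tangent_solution_flow
    {E : Type*} [NormedAddCommGroup E] [NormedSpace ℝ E] [FiniteDimensional ℝ E]
    (F : E → E) (hF : ContDiff ℝ 2 F)
    (φ : ℝ → E → E)
    (hφ0 : ∀ x : E, φ 0 x = x)
    (hφadd : ∀ (s t : ℝ) (x : E), φ (s + t) x = φ s (φ t x))
    (hφode : ∀ (x : E) (t : ℝ), HasDerivAt (fun s => φ s x) (F (φ t x)) t)
    (hφC1 : ∀ t : ℝ, ContDiff ℝ 1 (φ t))
    (hφD : Continuous fun p : ℝ × E => fderiv ℝ (φ p.1) p.2)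
    (K : Set E) (hKc : IsCompact K) (hφK : ∀ t : ℝ, φ t '' K = K)
    (hFne : ∀ x ∈ K, F x ≠ 0)
    (Vs Vu Vc : E → Submodule ℝ E)
    (hVc : ∀ x ∈ K, Vc x = Submodule.span ℝ {F x})
    (hequivs : ∀ (t : ℝ), ∀ x ∈ K, (Vs x).map (fderiv ℝ (φ t) x : E →ₗ[ℝ] E) = Vs (φ t x))
    (hequivu : ∀ (t : ℝ), ∀ x ∈ K, (Vu x).map (fderiv ℝ (φ t) x : E →ₗ[ℝ] E) = Vu (φ t x))
    (hequivc : ∀ (t : ℝ), ∀ x ∈ K, (Vc x).map (fderiv ℝ (φ t) x : E →ₗ[ℝ] E) = Vc (φ t x))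
    (C lam : ℝ) (hC : 0 < C) (hlam0 : 0 < lam) (hlam1 : lam < 1)
    (hyps : ∀ t : ℝ, 0 ≤ t → ∀ x ∈ K, ∀ v ∈ Vs x, ‖fderiv ℝ (φ t) x v‖ ≤ C * lam ^ t * ‖v‖)
    (hypu : ∀ t : ℝ, 0 ≤ t → ∀ x ∈ K, ∀ v ∈ Vu x, ‖fderiv ℝ (φ (-t)) x v‖ ≤ C * lam ^ t * ‖v‖)
    (Ps Pu Pc : E → E →L[ℝ] E)
    (hproj : ∀ x ∈ K, ∀ v : E, Ps x v ∈ Vs x ∧ Pu x v ∈ Vu x ∧ Pc x v ∈ Vc x ∧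
      Ps x v + Pu x v + Pc x v = v)
    (hdirect : ∀ x ∈ K, ∀ vs ∈ Vs x, ∀ vu ∈ Vu x, ∀ vc ∈ Vc x,
      vs + vu + vc = 0 → vs = 0 ∧ vu = 0 ∧ vc = 0)
    (hPbdd : ∃ M : ℝ, ∀ x ∈ K, ‖Ps x‖ + ‖Pu x‖ + ‖Pc x‖ ≤ M)
    (x₀ : E) (hx₀ : x₀ ∈ K)
    (v : ℝ → E) (hvb : ∃ M : ℝ, ∀ t : ℝ, ‖v t‖ ≤ M)
    (η : ℝ → ℝ) (hηc : Continuous η) (hηb : ∃ M : ℝ, ∀ t : ℝ, |η t| ≤ M)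
    (hode : ∀ t : ℝ,
      HasDerivAt v (fderiv ℝ F (φ t x₀) (v t) - η t • F (φ t x₀)) t) :
    (∀ t : ℝ, v t ∈ Vc (φ t x₀)) ∧
    ∃ h : ℝ → ℝ, (∀ t : ℝ, v t = -h t • F (φ t x₀)) ∧
      (∃ M : ℝ, ∀ t : ℝ, |h t| ≤ M) ∧ (∀ t : ℝ, HasDerivAt h (η t) t) :=
  center_tangent_solution_flow_general F hF φ hφ0 hφadd hφode hφC1 hφD K hKc hφK hFne Vs Vu Vc hVc
    hequivs hequivu hequivc C lam hC hlam0 hlam1 hyps hypu Ps Pu Pc hproj hdirect hPbdd x₀ hx₀ v hvb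
    η hηc hode
end
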